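/- arXiv:0903.5033 — 13 statements merged into one kernel-verified Lean document; each statement's English description precedes it below -/
import Mathlib

section
/- Let T be an integral domain with maximal ideal M, φ : T → T/M = K the quotient map, D a subring of K, and R = φ⁻¹(D) the pullback. If T is local, then T is well-centered on R. -/
/-!
Every element of a local ring is either a unit, which some unit (its inverse) carries to
`1 ∈ R`, or lies in the maximal ideal `M`, which is contained in `R = φ⁻¹(D)` because
`φ(M) = 0 ∈ D`.
-/

open IsLocalRing

theorem Subring.ker_le_comap {A B : Type*} [Ring A] [Ring B] (f : A →+* B) (S : Subring B) :
    (RingHom.ker f : Set A) ⊆ S.comap f := fun _ hx =>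
  Subring.mem_comap.mpr ((RingHom.mem_ker.mp hx).symm ▸ S.zero_mem)

theorem exists_unit_mul_mem_of_maximalIdeal_le {T : Type*} [CommRing T] [IsLocalRing T]
    (R : Subring T) (hMR : (maximalIdeal T : Set T) ⊆ R) (b : T) :
    ∃ u : Tˣ, (u : T) * b ∈ R := by
  by_cases hb : IsUnit b
  · exact ⟨hb.unit⁻¹, hb.val_inv_mul ▸ R.one_mem⟩
  · exact ⟨1, (one_mul b).symm ▸ hMR ((mem_maximalIdeal b).mpr hb)⟩

theorem pullback_local_wellCentered_general
    (T : Type*) [CommRing T] [IsLocalRing T]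
    (M : Ideal T) (hM : M.IsMaximal)
    (D : Subring (T ⧸ M))
    (R : Subring T) (hR : R = Subring.comap (Ideal.Quotient.mk M) D) :
    ∀ b : T, ∃ u : Tˣ, (u : T) * b ∈ R := by
  have hMR : (maximalIdeal T : Set T) ⊆ R := by
    rw [← eq_maximalIdeal hM, hR]
    simpa only [Ideal.mk_ker] using Subring.ker_le_comap (Ideal.Quotient.mk M) D
  exact exists_unit_mul_mem_of_maximalIdeal_le R hMR

/-- Pullback `R = φ⁻¹(D)` of a local domain `T` modulo a maximal ideal `M`:
`T` is well-centered on `R`. -/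
theorem pullback_local_wellCentered
    (T : Type*) [CommRing T] [IsDomain T] [IsLocalRing T]
    (M : Ideal T) (hM : M.IsMaximal)
    (D : Subring (T ⧸ M))
    (R : Subring T) (hR : R = Subring.comap (Ideal.Quotient.mk M) D)
    (hRT : R ≠ ⊤) :
    ∀ b : T, ∃ u : Tˣ, (u : T) * b ∈ R :=
  pullback_local_wellCentered_general T M hM D R hR
end

section
/- Let T be an integral domain with maximal ideal M, φ : T → K = T/M the quotient map, D a subring of K with quotient field k, and R = φ⁻¹(D). If every intermediate ring S with R ⊆ S ⊆ T is well-centered on R, then every element of K is algebraic over k. -/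
/-!
Suppose `x ∈ K` is transcendental over `k` and lift it to `t ∈ T`. The ring `S = R[t]` maps into
`k[x]`, which is a polynomial ring, so every unit of `S` maps to a nonzero constant `c ∈ k`.
Well-centeredness gives a unit `u` of `S` with `u t ∈ R`, hence `c x = φ(u t) ∈ D ⊆ k`, and so
`x ∈ k`, a contradiction.
-/

open Polynomial

theorem Transcendental.exists_isUnit_algebraMap_eq_of_isUnit {R A : Type*} [CommRing R]
    [NoZeroDivisors R] [Ring A] [Algebra R A] {x : A} (hx : Transcendental R x)
    {a : Algebra.adjoin R {x}} (ha : IsUnit a) :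
    ∃ r : R, IsUnit r ∧ algebraMap R A r = a := by
  let e := algEquivOfTranscendental R x hx
  obtain ⟨r, hr, hrp⟩ := Polynomial.isUnit_iff.mp (ha.map e.symm)
  refine ⟨r, hr, ?_⟩
  rw [← e.apply_symm_apply a, ← hrp, ← algebraMap_eq, AlgEquiv.commutes]
  rfl

theorem Subring.closure_insert_le_comap_adjoin {A K : Type*} [CommRing A] [Field K]
    (f : A →+* K) {D : Subring K} {k : Subfield K} (hDk : D ≤ k.toSubring) (t : A) :
    closure (insert t (D.comap f : Set A)) ≤ (Algebra.adjoin k {f t}).toSubring.comap f := by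
  rw [closure_le, Set.insert_subset_iff]
  refine ⟨Algebra.self_mem_adjoin_singleton k (f t), fun a ha => ?_⟩
  exact (Algebra.adjoin k {f t}).algebraMap_mem (⟨f a, hDk ha⟩ : k)

theorem pullback_all_intermediate_wellCentered_implies_algebraic_general
    (T : Type*) [CommRing T]
    (M : Ideal T) [hM : M.IsMaximal]
    (D : Subring (T ⧸ M))
    (R : Subring T) (hR : R = Subring.comap (Ideal.Quotient.mk M) D)
    (hwc : ∀ S : Subring T, R ≤ S →
      ∀ b : S, ∃ u : Sˣ, (((u : S) * b : S) : T) ∈ R) :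
    letI : Field (T ⧸ M) := Ideal.Quotient.field M
    ∀ x : T ⧸ M, IsAlgebraic (Subfield.closure (D : Set (T ⧸ M))) x := by
  let _ : Field (T ⧸ M) := Ideal.Quotient.field M
  subst hR
  set φ := Ideal.Quotient.mk M
  set k := Subfield.closure (D : Set (T ⧸ M))
  have hDk : D ≤ k.toSubring := fun _ ha => Subfield.subset_closure ha
  intro x
  by_contra hx
  obtain ⟨t, rfl⟩ := Ideal.Quotient.mk_surjective x
  set S := Subring.closure (insert t (D.comap φ : Set T))
  obtain ⟨u, hu⟩ := hwc S (fun _ ha => Subring.subset_closure (Set.mem_insert_of_mem t ha))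
    ⟨t, Subring.subset_closure (Set.mem_insert t _)⟩
  let ψ := φ.restrict S (Algebra.adjoin k {φ t})
    fun _ hs => Subring.closure_insert_le_comap_adjoin φ hDk t hs
  obtain ⟨c, hc, hcu : (c : T ⧸ M) = φ u⟩ :=
    Transcendental.exists_isUnit_algebraMap_eq_of_isUnit hx (u.isUnit.map ψ)
  have hct : (c : T ⧸ M) * φ t ∈ k := by
    rw [hcu, ← map_mul]
    exact hDk hu
  have ht : φ t ∈ k := by
    simpa [inv_mul_cancel_left₀ (Subtype.coe_ne_coe.mpr hc.ne_zero)] using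
      k.mul_mem (k.inv_mem c.2) hct
  exact hx (isAlgebraic_algebraMap (⟨_, ht⟩ : k))

/-- Pullback `R = φ⁻¹(D)` of a domain `T` modulo a maximal ideal `M`, with `k` the quotient
field of `D` inside `K = T/M`: if every intermediate ring `R ⊆ S ⊆ T` is well-centered on `R`,
then every element of `K` is algebraic over `k`. -/
theorem pullback_all_intermediate_wellCentered_implies_algebraic
    (T : Type*) [CommRing T] [IsDomain T]
    (M : Ideal T) [hM : M.IsMaximal]
    (D : Subring (T ⧸ M))
    (R : Subring T) (hR : R = Subring.comap (Ideal.Quotient.mk M) D)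
    (hRT : R ≠ ⊤)
    (hwc : ∀ S : Subring T, R ≤ S →
      ∀ b : S, ∃ u : Sˣ, (((u : S) * b : S) : T) ∈ R) :
    letI : Field (T ⧸ M) := Ideal.Quotient.field M
    ∀ x : T ⧸ M, IsAlgebraic (Subfield.closure (D : Set (T ⧸ M))) x :=
  pullback_all_intermediate_wellCentered_implies_algebraic_general T M (hM := hM) D R hR hwc
end

section
/- Let T be a local integral domain with maximal ideal M, φ : T → K = T/M the quotient map, k a subfield of K, and R = φ⁻¹(k). Then every intermediate ring S with R ⊆ S ⊆ T is well-centered on R if and only if K is algebraic over k. -/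
/-!
Write `R = φ⁻¹(k)`. If `K` is algebraic over `k` and `b ∈ S` has `β = φ b ≠ 0`, then
`β⁻¹ ∈ k[β] ⊆ φ(S)`, so `t b ≡ 1 (mod M)` for some `t ∈ S`; as `T` is local, `t b` is a unit
of `T`, and its inverse lies in `R ⊆ S`, so `b` is a unit of `S` and `b⁻¹ b = 1 ∈ R`.
Conversely, if `x = φ b` is transcendental over `k`, take `S = R[b]`: then `φ(S) ⊆ k[x] ≅ k[X]`,
whose units are the nonzero constants, so `u b ∈ R` with `u ∈ Sˣ` forces `x ∈ k`.
-/

namespace Subring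

/-- Each `b ∈ S` is a unit of `S` times an element of `R`, in the equivalent form `u * b ∈ R`. -/
def IsWellCenteredOn {T : Type*} [Ring T] (S R : Subring T) : Prop :=
  ∀ b : S, ∃ u : Sˣ, (((u : S) * b : S) : T) ∈ R

end Subring

theorem Transcendental.mem_range_algebraMap_of_mul_eq_one {F A : Type*} [CommRing F] [IsDomain F]
    [CommRing A] [Algebra F A] {x y z : A} (hx : Transcendental F x)
    (hy : y ∈ Algebra.adjoin F {x}) (hz : z ∈ Algebra.adjoin F {x}) (hyz : y * z = 1) :
    y ∈ Set.range (algebraMap F A) := by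
  rw [Algebra.adjoin_singleton_eq_range_aeval] at hy hz
  obtain ⟨p, rfl⟩ := hy
  obtain ⟨q, rfl⟩ := hz
  have hpq : p * q = 1 := transcendental_iff_injective.mp hx (by simpa using hyz)
  obtain ⟨r, -, rfl⟩ := Polynomial.isUnit_iff.mp (IsUnit.of_mul_eq_one q hpq)
  exact ⟨r, by simp⟩

theorem IsLocalRing.isUnit_of_map_ne_zero {T K : Type*} [CommRing T] [IsLocalRing T]
    [DivisionRing K] {f : T →+* K} (hf : Function.Surjective f) {t : T} (ht : f t ≠ 0) :
    IsUnit t := by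
  by_contra hu
  have : t ∈ RingHom.ker f := by
    rw [IsLocalRing.ker_eq_maximalIdeal f hf]
    exact hu
  exact ht this

section Pullback

variable {T K : Type*} [CommRing T] [Field K] (f : T →+* K) (k : Subfield K)

theorem map_closure_insert_comap_le_adjoin (b : T) :
    (Subring.closure (insert b (k.toSubring.comap f : Set T))).map f ≤
      (Algebra.adjoin k {f b}).toSubring := by
  rw [RingHom.map_closure, Algebra.adjoin_eq_ring_closure]
  refine Subring.closure_mono ?_
  rintro _ ⟨t, rfl | ht, rfl⟩
  · exact Or.inr rfl
  · exact Or.inl ⟨⟨f t, ht⟩, rfl⟩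

theorem not_isWellCenteredOn_closure_insert_of_transcendental {b : T}
    (hb : Transcendental k (f b)) :
    ¬ (Subring.closure (insert b (k.toSubring.comap f : Set T))).IsWellCenteredOn
        (k.toSubring.comap f) := by
  set S := Subring.closure (insert b (k.toSubring.comap f : Set T))
  intro h
  obtain ⟨u, hu⟩ := h ⟨b, Subring.subset_closure (Set.mem_insert b _)⟩
  have mem_adjoin (s : S) : f s ∈ Algebra.adjoin k {f b} :=
    map_closure_insert_comap_le_adjoin f k b ⟨s, s.2, rfl⟩
  have hu_inv : f (u : S) * f ((u⁻¹ : Sˣ) : S) = 1 := by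
    rw [← map_mul, ← Subring.coe_mul, Units.mul_inv, Subring.coe_one, map_one]
  obtain ⟨a, ha⟩ := hb.mem_range_algebraMap_of_mul_eq_one (mem_adjoin u) (mem_adjoin _) hu_inv
  have hu0 : f (u : S) ≠ 0 := left_ne_zero_of_mul_eq_one hu_inv
  have hub : f (u : S) * f b ∈ k := by simpa using hu
  have hbk : f b ∈ k := by
    have hf_inv : (f (u : S))⁻¹ ∈ k := by rw [← ha]; exact k.inv_mem a.2
    simpa [hu0] using k.mul_mem hf_inv hub
  exact hb (isAlgebraic_algebraMap (⟨f b, hbk⟩ : k))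

theorem isAlgebraic_of_forall_isWellCenteredOn (hf : Function.Surjective f)
    (h : ∀ S : Subring T, k.toSubring.comap f ≤ S → S.IsWellCenteredOn (k.toSubring.comap f))
    (x : K) : IsAlgebraic k x := by
  by_contra hx
  obtain ⟨b, rfl⟩ := hf x
  exact not_isWellCenteredOn_closure_insert_of_transcendental f k hx
    (h _ fun t ht ↦ Subring.subset_closure (Set.mem_insert_of_mem b ht))

variable {f k} {S : Subring T}

theorem adjoin_le_map_of_comap_le (hf : Function.Surjective f) (hS : k.toSubring.comap f ≤ S)
    {b : T} (hb : b ∈ S) : (Algebra.adjoin k {f b}).toSubring ≤ S.map f := by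
  rw [Algebra.adjoin_eq_ring_closure, Subring.closure_le]
  rintro _ (⟨a, rfl⟩ | rfl)
  · obtain ⟨t, ht⟩ := hf a
    exact ⟨t, hS (show f t ∈ k by rw [ht]; exact a.2), ht⟩
  · exact ⟨b, hb, rfl⟩

variable [IsLocalRing T]

theorem isUnit_of_map_mem_of_map_ne_zero (hf : Function.Surjective f)
    (hS : k.toSubring.comap f ≤ S) {s : S} (hsk : f s ∈ k) (hs0 : f s ≠ 0) : IsUnit s := by
  obtain ⟨v, hv⟩ := IsLocalRing.isUnit_of_map_ne_zero hf hs0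
  have hv_inv : ((v⁻¹ : Tˣ) : T) ∈ S := by
    refine hS (show f _ ∈ k from ?_)
    rw [map_units_inv, hv]
    exact k.inv_mem hsk
  refine IsUnit.of_mul_eq_one ⟨_, hv_inv⟩ (Subtype.ext ?_)
  simp [← hv]

theorem isUnit_of_isIntegral_of_map_ne_zero (hf : Function.Surjective f)
    (hS : k.toSubring.comap f ≤ S) {b : S} (hint : IsIntegral k (f b)) (hb0 : f b ≠ 0) :
    IsUnit b := by
  obtain ⟨t, htS, ht⟩ := adjoin_le_map_of_comap_le hf hS b.2 hint.inv_mem_adjoin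
  have htb : f (t * b) = 1 := by rw [map_mul, ht, inv_mul_cancel₀ hb0]
  have hunit : IsUnit ((⟨t, htS⟩ : S) * b) :=
    isUnit_of_map_mem_of_map_ne_zero hf hS (by simp [htb]) (by simp [htb])
  exact isUnit_of_mul_isUnit_right hunit

theorem isWellCenteredOn_of_isIntegral (hf : Function.Surjective f)
    (hS : k.toSubring.comap f ≤ S) (hint : ∀ b : S, IsIntegral k (f b)) :
    S.IsWellCenteredOn (k.toSubring.comap f) := by
  intro b
  by_cases hb0 : f b = 0
  · exact ⟨1, by simp [hb0]⟩
  · obtain ⟨u, rfl⟩ := isUnit_of_isIntegral_of_map_ne_zero hf hS (hint b) hb0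
    exact ⟨u⁻¹, by simp⟩

end Pullback

theorem pullback_all_intermediate_wellCentered_iff_algebraic_general
    (T : Type*) [CommRing T] [IsLocalRing T]
    (M : Ideal T) [hM : M.IsMaximal]
    (R : Subring T) :
    letI : Field (T ⧸ M) := Ideal.Quotient.field M
    ∀ k : Subfield (T ⧸ M), R = Subring.comap (Ideal.Quotient.mk M) k.toSubring →
    ((∀ S : Subring T, R ≤ S → ∀ b : S, ∃ u : Sˣ, (((u : S) * b : S) : T) ∈ R) ↔
      (∀ x : T ⧸ M, IsAlgebraic k x)) := by
  let _ : Field (T ⧸ M) := Ideal.Quotient.field M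
  rintro k rfl
  exact ⟨isAlgebraic_of_forall_isWellCenteredOn _ k Ideal.Quotient.mk_surjective,
    fun halg S hS ↦ isWellCenteredOn_of_isIntegral Ideal.Quotient.mk_surjective hS
      fun b ↦ (halg _).isIntegral⟩

/-- Pullback `R = φ⁻¹(k)` of a local domain `T` modulo its maximal ideal `M`, with `k` a
subfield of `K = T/M`: every intermediate ring `R ⊆ S ⊆ T` is well-centered on `R` iff `K`
is algebraic over `k`. -/
theorem pullback_all_intermediate_wellCentered_iff_algebraic
    (T : Type*) [CommRing T] [IsDomain T] [IsLocalRing T]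
    (M : Ideal T) [hM : M.IsMaximal]
    (R : Subring T) (hRT : R ≠ ⊤) :
    letI : Field (T ⧸ M) := Ideal.Quotient.field M
    ∀ k : Subfield (T ⧸ M), R = Subring.comap (Ideal.Quotient.mk M) k.toSubring →
    ((∀ S : Subring T, R ≤ S → ∀ b : S, ∃ u : Sˣ, (((u : S) * b : S) : T) ∈ R) ↔
      (∀ x : T ⧸ M, IsAlgebraic k x)) :=
  pullback_all_intermediate_wellCentered_iff_algebraic_general T M (hM := hM) R
end

section
/- Let T = ℚ[X], M = (X²+2)T, φ : T → T/M ≅ ℚ(√2) the quotient map, and R = φ⁻¹(ℚ). Then T is not well-centered on R; in particular there is no f ∈ R with fT = XT. -/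
open Polynomial

/-! A polynomial lies in `R` iff it differs from a constant by a multiple of `X² + 2`. A generator
of `XT` is an associate of `X`, hence linear, and subtracting a constant leaves it linear and nonzero,
so it cannot be divisible by the quadratic `X² + 2`. -/

theorem Ideal.mem_comap_range_algebraMap_iff {K A : Type*} [CommRing K] [CommRing A] [Algebra K A]
    (M : Ideal A) (f : A) :
    f ∈ (algebraMap K (A ⧸ M)).range.comap (Ideal.Quotient.mk M) ↔
      ∃ q : K, f - algebraMap K A q ∈ M := by
  simp only [Subring.mem_comap, RingHom.mem_range, ← Ideal.Quotient.mk_algebraMap,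
    Ideal.Quotient.eq, eq_comm (b := Ideal.Quotient.mk M f)]

namespace Polynomial

variable {R : Type*} [CommRing R] [IsDomain R]

theorem natDegree_eq_one_of_associated_X {f : R[X]} (h : Associated f X) : f.natDegree = 1 := by
  rw [natDegree_eq_of_degree_eq (degree_eq_degree_of_associated h), natDegree_X]

theorem sub_C_notMem_span_singleton_of_natDegree_lt {f p : R[X]} (q : R)
    (hf : f.natDegree = 1) (hp : 1 < p.natDegree) : f - C q ∉ Ideal.span {p} := by
  rw [Ideal.mem_span_singleton]
  intro hdvd
  have hdeg : (f - C q).natDegree = 1 := by rw [natDegree_sub_C, hf]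
  have hne : f - C q ≠ 0 := fun h0 => by simp [h0] at hdeg
  have := natDegree_le_of_dvd hdvd hne
  omega

theorem not_associated_X_of_mem_comap_range_algebraMap {f p : R[X]} (hp : 1 < p.natDegree)
    (hf : f ∈ (algebraMap R (R[X] ⧸ Ideal.span {p})).range.comap (Ideal.Quotient.mk _)) :
    ¬ Associated f X := fun hX => by
  obtain ⟨q, hq⟩ := (Ideal.mem_comap_range_algebraMap_iff _ f).mp hf
  exact sub_C_notMem_span_singleton_of_natDegree_lt q (natDegree_eq_one_of_associated_X hX) hp hq

end Polynomial

/-- For `T = ℚ[X]`, `M = (X² + 2)T`, `R = φ⁻¹(ℚ)` (polynomials with rational image mod `M`),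
`T` is not well-centered on `R`; in particular no `f ∈ R` satisfies `fT = XT`. -/
theorem Q_adjoin_sqrt2_pullback_not_wellCentered :
    ∀ M : Ideal (Polynomial ℚ), M = Ideal.span {Polynomial.X ^ 2 + 2} →
    ∀ R : Subring (Polynomial ℚ),
      R = Subring.comap (Ideal.Quotient.mk M) (algebraMap ℚ (Polynomial ℚ ⧸ M)).range →
    (¬ ∀ b : Polynomial ℚ, ∃ f ∈ R, Ideal.span {b} = Ideal.span {f}) ∧
    ¬ ∃ f ∈ R, Ideal.span {f} = Ideal.span {(Polynomial.X : Polynomial ℚ)} := by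
  rintro M rfl R hR
  have hdeg : 1 < (X ^ 2 + 2 : ℚ[X]).natDegree := by
    rw [show (X ^ 2 + 2 : ℚ[X]).natDegree = 2 by compute_degree!]
    norm_num
  have no_generator_of_X : ¬ ∃ f ∈ R, Ideal.span {f} = Ideal.span {(X : ℚ[X])} :=
    fun ⟨f, hfR, hspan⟩ => not_associated_X_of_mem_comap_range_algebraMap hdeg (hR ▸ hfR)
      (Ideal.span_singleton_eq_span_singleton.mp hspan)
  refine ⟨fun h => no_generator_of_X ?_, no_generator_of_X⟩
  obtain ⟨f, hfR, hspan⟩ := h X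
  exact ⟨f, hfR, hspan.symm⟩
end

section
/- Let R be a pseudo-valuation domain which is a Mori domain, with associated valuation overring V. Then every well-centered overring of R is a Mori domain. -/
open scoped nonZeroDivisors

/-- An ideal of a domain is divisorial if it is its own double divisorial closure
(`I = (R : (R : I))`, i.e. `I_v = I`). -/
def IsDivisorialIdeal (R : Type*) [CommRing R] [IsDomain R] (I : Ideal R) : Prop :=
  1 / (1 / (I : FractionalIdeal R⁰ (FractionRing R))) = (I : FractionalIdeal R⁰ (FractionRing R))

/-- A Mori domain: the ascending chain condition holds on divisorial (integral) ideals. -/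
def IsMoriDomain (R : Type*) [CommRing R] [IsDomain R] : Prop :=
  ∀ c : ℕ → Ideal R, Monotone c → (∀ n, IsDivisorialIdeal R (c n)) →
    ∃ N, ∀ n, N ≤ n → c n = c N

/-!
A pseudo-valuation domain `T = φ⁻¹(k)` with valuation overring `V` and maximal ideal `m` has
few divisorial ideals: if `x ∈ I ⊆ xV`, then either `I = xT`, or `(T : I) = x⁻¹m` and
`I_v = xV`. Applied to the divisorial ideals `T ∩ xV` (`x ∈ m`), the Mori property of `T` gives
the ascending chain condition on principal ideals of `V`, so `V` is a DVR. Conversely, when `V`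
is a DVR, every chain of divisorial ideals of `T` is eventually trapped between `xT` and `xV`
for an element `x` of maximal valuation, hence stabilizes. Finally, a well-centered overring
`S` of `T` either lies in `V`, and is then again a pseudo-valuation domain with valuation
overring `V`, or properly contains the DVR `V`, and is then a field.
-/

section MoriDomain

variable {R : Type*} [CommRing R] [IsDomain R]

theorem isDivisorialIdeal_iff (K : Type*) [Field K] [Algebra R K] [IsFractionRing R K]
    (I : Ideal R) : IsDivisorialIdeal R I ↔ 1 / (1 / (I : FractionalIdeal R⁰ K)) = I := by
  rw [IsDivisorialIdeal,
    ← (FractionalIdeal.mapEquiv (FractionRing.algEquiv R K)).injective.eq_iff]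
  simp [FractionalIdeal.map_coeIdeal]

theorem IsMoriDomain.of_isNoetherianRing [IsNoetherianRing R] : IsMoriDomain R := fun c hc _ =>
  let ⟨n, hn⟩ := monotone_stabilizes_iff_noetherian.mpr inferInstance ⟨c, hc⟩
  ⟨n, fun m hm => (hn m hm).symm⟩

theorem IsMoriDomain.of_isField (h : IsField R) : IsMoriDomain R :=
  let _ := h.toField
  .of_isNoetherianRing

theorem IsMoriDomain.wellFoundedGT (h : IsMoriDomain R) :
    WellFoundedGT {I : Ideal R // IsDivisorialIdeal R I} := by
  refine wellFoundedGT_iff_monotone_chain_condition.mpr fun c => ?_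
  obtain ⟨n, hn⟩ := h (fun n => c n) (fun _ _ hmn => c.monotone hmn) (fun n => (c n).2)
  exact ⟨n, fun m hm => Subtype.ext (hn m hm).symm⟩

end MoriDomain

section Subring

variable {K : Type*} [Field K]

theorem Subring.isField_of_forall_inv_mem {S : Subring K} (h : ∀ z ∈ S, z⁻¹ ∈ S) :
    IsField S where
  exists_pair_ne := ⟨0, 1, zero_ne_one⟩
  mul_comm := mul_comm
  mul_inv_cancel {z} hz :=
    ⟨⟨z⁻¹, h z z.2⟩, Subtype.ext (mul_inv_cancel₀ fun h0 => hz (Subtype.ext h0))⟩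

theorem mem_one_div_iff_forall_mul_mem {T : Subring K} [IsFractionRing T K]
    {C : FractionalIdeal T⁰ K} (hC : C ≠ 0) {z : K} :
    z ∈ 1 / C ↔ ∀ y ∈ C, z * y ∈ T := by
  simp only [FractionalIdeal.mem_div_iff_of_ne_zero hC, FractionalIdeal.mem_one_iff]
  exact forall₂_congr fun _ _ =>
    ⟨fun ⟨t, ht⟩ => ht ▸ t.2, fun h => ⟨⟨_, h⟩, rfl⟩⟩

theorem coe_mem_coeIdeal_iff {T : Subring K} [IsFractionRing T K] {c : Ideal T} {t : T} :
    (t : K) ∈ (c : FractionalIdeal T⁰ K) ↔ t ∈ c := by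
  simp only [FractionalIdeal.mem_coeIdeal]
  exact ⟨fun ⟨t', ht', h⟩ => Subtype.ext h ▸ ht', fun h => ⟨t, h, rfl⟩⟩

end Subring

namespace ValuationSubring

variable {K : Type*} [Field K] (V : ValuationSubring K)

theorem exists_mem_nonunits_ne_zero {V : ValuationSubring K} (hV : V ≠ ⊤) :
    ∃ m ∈ V.nonunits, m ≠ 0 := by
  by_contra! h
  refine hV (_root_.eq_top_iff.mpr fun z _ => by_contra fun hz => hz ?_)
  rw [inv_eq_zero.mp (h _ (V.inv_mem_nonunits_iff.mpr (Or.inr hz)))]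
  exact V.zero_mem

theorem mul_mem_nonunits {x y : K} (hx : x ∈ V.nonunits) (hy : y ∈ V) :
    x * y ∈ V.nonunits := by
  rw [mem_nonunits_iff, map_mul]
  exact (mul_le_of_le_one_right' ((V.valuation_le_one_iff y).mpr hy)).trans_lt hx

theorem dvdNotUnit_iff_valuation_lt {a b : V} :
    DvdNotUnit a b ↔ V.valuation b < V.valuation a := by
  constructor
  · rintro ⟨ha, x, hx, rfl⟩
    have hva : 0 < V.valuation a :=
      zero_lt_iff.mpr ((Valuation.ne_zero_iff _).mpr fun h => ha (Subtype.ext h))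
    have hvx : V.valuation x < 1 := (V.valuation_lt_one_iff x).mp hx
    change V.valuation ((a : K) * x) < _
    rw [map_mul]
    exact mul_lt_of_lt_one_right hva hvx
  · intro h
    have ha : (a : K) ≠ 0 := by
      rintro h0
      rw [h0, map_zero] at h
      exact not_lt_zero h
    have hvx : V.valuation (b / a) < 1 := by
      rwa [map_div₀, div_lt_one₀ (zero_lt_iff.mpr ((Valuation.ne_zero_iff _).mpr ha))]
    refine ⟨fun h0 => ha (by simp [h0]), ⟨b / a, (V.valuation_le_one_iff _).mp hvx.le⟩,
      fun hu => ((V.valuation_eq_one_iff _).mp hu).not_lt hvx, Subtype.ext ?_⟩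
    simp [mul_div_cancel₀ _ ha]

theorem exists_mem_forall_valuation_le [WfDvdMonoid V] {s : Set K} (hsV : s ⊆ V)
    (hs : s.Nonempty) : ∃ x ∈ s, ∀ y ∈ s, V.valuation y ≤ V.valuation x := by
  obtain ⟨x, hx, hmin⟩ := wellFounded_dvdNotUnit.has_min {a : V | (a : K) ∈ s}
    (let ⟨y, hy⟩ := hs; ⟨⟨y, hsV hy⟩, hy⟩)
  exact ⟨x, hx, fun y hy => not_lt.mp fun hlt =>
    hmin ⟨y, hsV hy⟩ hy ((V.dvdNotUnit_iff_valuation_lt).mpr hlt)⟩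

theorem inv_mem_of_toSubring_lt [WfDvdMonoid V] {S : Subring K} (hVS : V.toSubring < S)
    {z : K} (hz : z ∈ S) : z⁻¹ ∈ S := by
  obtain ⟨s, hsS, hsV⟩ := SetLike.exists_of_lt hVS
  rcases V.mem_or_inv_mem z with hzV | hzV
  · rcases eq_or_ne z 0 with rfl | hz0
    · simp
    have hs0 : s ≠ 0 := fun h => hsV (h ▸ V.zero_mem)
    have hp : s⁻¹ ∈ V.nonunits := V.inv_mem_nonunits_iff.mpr (Or.inr hsV)
    -- `z` divides a power of `s⁻¹`, because the multiplicity of `s⁻¹` in `z` is finite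
    obtain ⟨n, hn⟩ := FiniteMultiplicity.of_not_isUnit
      (a := (⟨s⁻¹, nonunits_subset hp⟩ : V)) (b := ⟨z, hzV⟩)
      (coe_mem_nonunits_iff.mp hp) fun h => hz0 (congrArg Subtype.val h)
    obtain ⟨a, ha⟩ := (ValuationRing.dvd_total _ _).resolve_left hn
    have ha' : (s⁻¹) ^ (n + 1) = z * a := congrArg Subtype.val ha
    have : a * s ^ (n + 1) * z = 1 := by
      rw [mul_right_comm, mul_comm (a : K), ← ha', inv_pow, inv_mul_cancel₀ (pow_ne_zero _ hs0)]
    rw [← eq_inv_of_mul_eq_one_left this]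
    exact S.mul_mem (hVS.le a.2) (S.pow_mem hsS _)
  · exact hVS.le hzV

/-- The ideal `T ∩ xV` of a subring `T ≤ V`. -/
def valuationLEIdeal {T : Subring K} (hT : T ≤ V.toSubring) (x : K) : Ideal T where
  carrier := {t | V.valuation t ≤ V.valuation x}
  add_mem' {a b} ha hb := by
    simp only [Set.mem_ofPred_eq, Subring.coe_add] at *
    exact (V.valuation.map_add a b).trans (max_le ha hb)
  zero_mem' := by simp
  smul_mem' c t ht := by
    simp only [Set.mem_ofPred_eq, smul_eq_mul, Subring.coe_mul, map_mul] at *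
    exact (mul_le_of_le_one_left' ((V.valuation_le_one_iff c).mpr (hT c.2))).trans ht

theorem mem_valuationLEIdeal {T : Subring K} (hT : T ≤ V.toSubring) {x : K} {t : T} :
    t ∈ V.valuationLEIdeal hT x ↔ V.valuation t ≤ V.valuation x := by
  rfl

theorem valuationLEIdeal_lt_valuationLEIdeal {T : Subring K} (hT : T ≤ V.toSubring) {x y : K}
    (hy : y ∈ T) (hxy : V.valuation x < V.valuation y) :
    V.valuationLEIdeal hT x < V.valuationLEIdeal hT y := by
  refine SetLike.lt_iff_le_and_exists.mpr ⟨fun t ht => ?_, ⟨y, hy⟩, ?_, ?_⟩ <;>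
    simp only [mem_valuationLEIdeal] at *
  exacts [ht.trans hxy.le, le_rfl, not_le.mpr hxy]

end ValuationSubring

/-- Encodes `T = φ⁻¹(k)`, with `φ : V → V/m` the residue map and `k` a subfield of `V/m`. -/
structure IsPseudoValuationSubring {K : Type*} [Field K] (V : ValuationSubring K)
    (T : Subring K) : Prop where
  le : T ≤ V.toSubring
  nonunits_subset : (V.nonunits : Set K) ⊆ T
  inv_mem {x : K} : x ∈ T → x ∉ V.nonunits → x⁻¹ ∈ T

namespace IsPseudoValuationSubring

variable {K : Type*} [Field K] {V : ValuationSubring K} {T : Subring K}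

theorem isFractionRing (hT : IsPseudoValuationSubring V T) (hV : V ≠ ⊤) :
    IsFractionRing T K := by
  obtain ⟨m, hm, hm0⟩ := ValuationSubring.exists_mem_nonunits_ne_zero hV
  have hT0 : ∀ {t : T}, (t : K) ≠ 0 → t ∈ T⁰ := fun ht =>
    mem_nonZeroDivisors_of_ne_zero fun h => ht (congrArg Subtype.val h)
  refine { map_units := ?_, surj := fun z => ?_, exists_of_eq := fun h => ⟨1, ?_⟩ }
  · rintro ⟨y, hy⟩
    exact isUnit_iff_ne_zero.mpr fun h => nonZeroDivisors.ne_zero hy (Subtype.ext h)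
  · by_cases hz : z ∈ V
    · exact ⟨(⟨z * m, hT.nonunits_subset (mul_comm m z ▸ V.mul_mem_nonunits hm hz)⟩,
        ⟨⟨m, hT.nonunits_subset hm⟩, hT0 hm0⟩), rfl⟩
    · have hz0 : z ≠ 0 := fun h => hz (h ▸ V.zero_mem)
      exact ⟨(1, ⟨⟨z⁻¹, hT.nonunits_subset (V.inv_mem_nonunits_iff.mpr (Or.inr hz))⟩,
        hT0 (inv_ne_zero hz0)⟩), mul_inv_cancel₀ hz0⟩
  · simp [Subtype.ext h]

/-- For `x ∈ C ⊆ xV` with `C ⊄ xT`, one has `(T : C) = x⁻¹ m` and `(T : x⁻¹ m) = xV`. -/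
theorem mem_one_div_one_div_iff (hT : IsPseudoValuationSubring V T) [IsFractionRing T K]
    (hV : V ≠ ⊤) {C : FractionalIdeal T⁰ K} {x y : K} (hxC : x ∈ C)
    (hCx : ∀ z ∈ C, V.valuation z ≤ V.valuation x) (hyC : y ∈ C) (hy : x⁻¹ * y ∉ T)
    (z : K) : z ∈ 1 / (1 / C) ↔ V.valuation z ≤ V.valuation x := by
  have hx0 : x ≠ 0 := by
    rintro rfl
    simp [T.zero_mem] at hy
  have hC0 : C ≠ 0 := fun h => hx0 (by simpa [h] using hxC)
  have hdual : ∀ w, w ∈ 1 / C ↔ V.valuation (w * x) < 1 := by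
    intro w
    rw [mem_one_div_iff_forall_mul_mem hC0]
    refine ⟨fun h => not_le.mp fun hwx => hy ?_, fun h u hu =>
      hT.nonunits_subset (V.mem_nonunits_iff.mpr ?_)⟩
    · have hwx' : w * x ∉ V.nonunits := not_lt.mpr hwx
      convert T.mul_mem (h y hyC) (hT.inv_mem (h x hxC) hwx') using 1
      have hw0 : w ≠ 0 := by
        rintro rfl
        simp at hwx
      field_simp
    · rw [map_mul] at h ⊢
      exact (mul_le_mul_right (hCx u hu) _).trans_lt h
  obtain ⟨m, hm, hm0⟩ := ValuationSubring.exists_mem_nonunits_ne_zero hV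
  have hdual0 : 1 / C ≠ 0 := by
    intro h
    have : m * x⁻¹ ∈ 1 / C := (hdual _).mpr (by rwa [inv_mul_cancel_right₀ hx0])
    rw [h, FractionalIdeal.mem_zero_iff] at this
    exact mul_ne_zero hm0 (inv_ne_zero hx0) this
  rw [mem_one_div_iff_forall_mul_mem hdual0]
  refine ⟨fun h => not_lt.mp fun hlt => hy ?_, fun h w hw =>
    hT.nonunits_subset (V.mem_nonunits_iff.mpr ?_)⟩
  · have hz0 : z ≠ 0 := by
      rintro rfl
      simp at hlt
    have hmem : x⁻¹ * y * z⁻¹ ∈ 1 / C := by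
      rw [hdual, show x⁻¹ * y * z⁻¹ * x = y / z by field_simp, map_div₀,
        div_lt_one₀ (zero_lt_iff.mpr ((Valuation.ne_zero_iff _).mpr hz0))]
      exact (hCx y hyC).trans_lt hlt
    convert h _ hmem using 1
    field_simp
  · rw [hdual, map_mul] at hw
    rw [map_mul, mul_comm]
    exact (mul_le_mul_right h _).trans_lt hw

theorem eq_spanSingleton_or_mem_one_div_one_div_iff (hT : IsPseudoValuationSubring V T)
    [IsFractionRing T K] (hV : V ≠ ⊤) {C : FractionalIdeal T⁰ K} {x : K} (hxC : x ∈ C)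
    (hCx : ∀ z ∈ C, V.valuation z ≤ V.valuation x) :
    C = FractionalIdeal.spanSingleton T⁰ x ∨
      ∀ z, z ∈ 1 / (1 / C) ↔ V.valuation z ≤ V.valuation x := by
  by_cases h : ∀ y ∈ C, x⁻¹ * y ∈ T
  · refine Or.inl (le_antisymm (fun y hy => ?_) (FractionalIdeal.spanSingleton_le_iff_mem.mpr hxC))
    rw [FractionalIdeal.mem_spanSingleton]
    refine ⟨⟨x⁻¹ * y, h y hy⟩, ?_⟩
    rcases eq_or_ne x 0 with rfl | hx0
    · have hy0 : y = 0 := by simpa using hCx y hy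
      simp [hy0]
    · rw [Algebra.smul_def]
      change x⁻¹ * y * x = y
      field_simp
  · obtain ⟨y, hyC, hy⟩ := not_forall₂.mp h
    exact Or.inr (hT.mem_one_div_one_div_iff hV hxC hCx hyC hy)

theorem isDivisorialIdeal_valuationLEIdeal (hT : IsPseudoValuationSubring V T) (hV : V ≠ ⊤)
    {x : K} (hx : x ∈ V.nonunits) :
    IsDivisorialIdeal T (V.valuationLEIdeal hT.le x) := by
  have := hT.isFractionRing hV
  rw [isDivisorialIdeal_iff K]
  have hmem : ∀ z, z ∈ (V.valuationLEIdeal hT.le x : FractionalIdeal T⁰ K) ↔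
      V.valuation z ≤ V.valuation x := by
    intro z
    refine ⟨fun hz => ?_, fun hz => ?_⟩
    · obtain ⟨t, ht, rfl⟩ := (FractionalIdeal.mem_coeIdeal _).mp hz
      exact ht
    · exact coe_mem_coeIdeal_iff (t := ⟨z, hT.nonunits_subset (hz.trans_lt hx)⟩).mpr hz
  rcases hT.eq_spanSingleton_or_mem_one_div_one_div_iff hV ((hmem x).mpr le_rfl)
    (fun z hz => (hmem z).mp hz) with h | h
  · rw [h, FractionalIdeal.one_div_spanSingleton, FractionalIdeal.one_div_spanSingleton, inv_inv]
  · ext z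
    rw [h, hmem]

theorem eq_span_singleton_or_eq_valuationLEIdeal (hT : IsPseudoValuationSubring V T)
    (hV : V ≠ ⊤) {c : Ideal T} (hc : IsDivisorialIdeal T c) {x : T} (hxc : x ∈ c)
    (hcx : ∀ z ∈ c, V.valuation z ≤ V.valuation x) :
    c = Ideal.span {x} ∨ c = V.valuationLEIdeal hT.le x := by
  have := hT.isFractionRing hV
  rw [isDivisorialIdeal_iff K] at hc
  rcases hT.eq_spanSingleton_or_mem_one_div_one_div_iff hV (C := c)
    (coe_mem_coeIdeal_iff.mpr hxc) (fun z hz => by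
      obtain ⟨t, ht, rfl⟩ := (FractionalIdeal.mem_coeIdeal _).mp hz
      exact hcx t ht) with h | h
  · left
    apply FractionalIdeal.coeIdeal_injective (K := K)
    change (c : FractionalIdeal T⁰ K) = (Ideal.span {x} : Ideal T)
    rw [h, FractionalIdeal.coeIdeal_span_singleton]
    rfl
  · right
    ext t
    rw [ValuationSubring.mem_valuationLEIdeal, ← coe_mem_coeIdeal_iff (K := K), ← hc, h]

theorem wfDvdMonoid (hT : IsPseudoValuationSubring V T) (hV : V ≠ ⊤) (hMori : IsMoriDomain T) :
    WfDvdMonoid V := by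
  obtain ⟨m, hm, hm0⟩ := ValuationSubring.exists_mem_nonunits_ne_zero hV
  have hmV : ∀ a : V, m * a ∈ V.nonunits := fun a => V.mul_mem_nonunits hm a.2
  let c : V → {I : Ideal T // IsDivisorialIdeal T I} := fun a =>
    ⟨V.valuationLEIdeal hT.le (m * a), hT.isDivisorialIdeal_valuationLEIdeal hV (hmV a)⟩
  have := hMori.wellFoundedGT
  refine ⟨Subrelation.wf (fun {a b} h => ?_) (InvImage.wf c wellFounded_gt)⟩
  refine V.valuationLEIdeal_lt_valuationLEIdeal hT.le (hT.nonunits_subset (hmV a)) ?_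
  rw [map_mul, map_mul]
  exact mul_lt_mul_of_pos_left ((V.dvdNotUnit_iff_valuation_lt).mp h)
    (zero_lt_iff.mpr ((Valuation.ne_zero_iff _).mpr hm0))

theorem isMoriDomain (hT : IsPseudoValuationSubring V T) (hV : V ≠ ⊤) [WfDvdMonoid V] :
    IsMoriDomain T := by
  intro c hc hdiv
  obtain ⟨_, ⟨N, x, hxN, rfl⟩, hmax⟩ := V.exists_mem_forall_valuation_le
    (s := {z | ∃ n, ∃ t ∈ c n, (t : K) = z}) (by rintro _ ⟨n, t, -, rfl⟩; exact hT.le t.2)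
    ⟨0, 0, 0, (c 0).zero_mem, rfl⟩
  have hbound : ∀ n, ∀ z ∈ c n, V.valuation z ≤ V.valuation x :=
    fun n z hz => hmax _ ⟨n, z, hz, rfl⟩
  have hcases : ∀ n, N ≤ n → c n = Ideal.span {x} ∨ c n = V.valuationLEIdeal hT.le x :=
    fun n hn => hT.eq_span_singleton_or_eq_valuationLEIdeal hV (hdiv n) (hc hn hxN) (hbound n)
  by_cases h : ∃ n, N ≤ n ∧ c n = V.valuationLEIdeal hT.le x
  · obtain ⟨n, -, hcn⟩ := h
    exact ⟨n, fun k hk => le_antisymm (hcn ▸ fun z hz => hbound k z hz) (hc hk)⟩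
  · push Not at h
    exact ⟨N, fun n hn => ((hcases n hn).resolve_right (h n hn)).trans
      ((hcases N le_rfl).resolve_right (h N le_rfl)).symm⟩

theorem isField_of_eq_top (hT : IsPseudoValuationSubring V T) (hV : V = ⊤) : IsField T := by
  refine Subring.isField_of_forall_inv_mem fun z hz => ?_
  rcases eq_or_ne z 0 with rfl | hz0
  · simp
  · refine hT.inv_mem hz fun h => ?_
    exact (V.mem_nonunits_iff_or.mp h).resolve_left hz0 (hV ▸ ValuationSubring.mem_top _)

theorem of_le_of_wellCentered (hT : IsPseudoValuationSubring V T) {S : Subring K} (hTS : T ≤ S)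
    (hSV : S ≤ V.toSubring) (hwc : ∀ b : S, ∃ u : Sˣ, (((u : S) * b : S) : K) ∈ T) :
    IsPseudoValuationSubring V S where
  le := hSV
  nonunits_subset := hT.nonunits_subset.trans hTS
  inv_mem {z} hz hzm := by
    obtain ⟨u, hu⟩ := hwc ⟨z, hz⟩
    have hu1 : V.valuation (u : S) = 1 :=
      (V.valuation_eq_one_iff ⟨_, hSV (u : S).2⟩).mp
        (IsUnit.of_mul_eq_one ⟨_, hSV (↑u⁻¹ : S).2⟩
          (Subtype.ext (congrArg Subtype.val u.mul_inv :)))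
    have hu0 : ((u : S) : K) ≠ 0 := fun h => by simp [h] at hu1
    have huz : ((u : S) : K) * z ∉ V.nonunits := by
      rwa [V.mem_nonunits_iff, map_mul, hu1, one_mul]
    have : z⁻¹ = (u : S) * (((u : S) : K) * z)⁻¹ := by field_simp
    rw [this]
    exact S.mul_mem (u : S).2 (hTS (hT.inv_mem hu huz))

theorem toSubring_le_of_not_le (hT : IsPseudoValuationSubring V T) {S : Subring K}
    (hTS : T ≤ S) (hSV : ¬S ≤ V.toSubring) :
    V.toSubring ≤ S := by
  obtain ⟨s, hsS, hsV⟩ := SetLike.not_le_iff_exists.mp hSV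
  have hs : s⁻¹ ∈ V.nonunits := V.inv_mem_nonunits_iff.mpr (Or.inr hsV)
  have hs0 : s ≠ 0 := fun h => hsV (h ▸ V.zero_mem)
  intro w hw
  have := S.mul_mem hsS (hTS (hT.nonunits_subset (V.mul_mem_nonunits hs hw)))
  rwa [mul_inv_cancel_left₀ hs0] at this

end IsPseudoValuationSubring

theorem ValuationRing.algebraMap_mem_nonunits_iff {A K : Type*} [CommRing A] [IsDomain A]
    [ValuationRing A] [Field K] [Algebra A K] [IsFractionRing A K] (a : A) :
    algebraMap A K a ∈ (valuation A K).valuationSubring.nonunits ↔ ¬IsUnit a := by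
  rw [ValuationSubring.mem_nonunits_iff_or]
  constructor
  · rintro (h | h) hu
    · exact not_isUnit_zero ((IsFractionRing.injective A K (h.trans (map_zero _).symm)) ▸ hu)
    · exact h ((mem_integer_iff A K _).mpr
        ⟨↑hu.unit⁻¹, map_units_inv (algebraMap A K) hu.unit⟩)
  · refine fun hna => or_iff_not_imp_left.mpr fun h0 hinv => hna ?_
    obtain ⟨b, hb⟩ := (mem_integer_iff A K _).mp hinv
    exact IsUnit.of_mul_eq_one b
      (IsFractionRing.injective A K (by rw [map_mul, hb, map_one, mul_inv_cancel₀ h0]))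

theorem isPseudoValuationSubring_map_comap {A K L : Type*} [CommRing A] [IsDomain A]
    [ValuationRing A] [Field K] [Algebra A K] [IsFractionRing A K] [Field L] (φ : A →+* L)
    (hφ : RingHom.ker φ = IsLocalRing.maximalIdeal A) (k : Subfield L) :
    IsPseudoValuationSubring (ValuationRing.valuation A K).valuationSubring
      ((k.toSubring.comap φ).map (algebraMap A K)) := by
  have hφ' : ∀ a, φ a = 0 ↔ ¬IsUnit a := fun a => by
    rw [← RingHom.mem_ker, hφ, IsLocalRing.mem_maximalIdeal, mem_nonunits_iff]
  refine ⟨?_, fun z hz => ?_, ?_⟩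
  · rintro _ ⟨a, -, rfl⟩
    exact (ValuationRing.mem_integer_iff A K _).mpr ⟨a, rfl⟩
  · obtain ⟨a, rfl⟩ := (ValuationRing.mem_integer_iff A K z).mp
      (ValuationSubring.nonunits_subset hz)
    refine ⟨a, ?_, rfl⟩
    change φ a ∈ k
    rw [(hφ' a).mpr ((ValuationRing.algebraMap_mem_nonunits_iff a).mp hz)]
    exact k.zero_mem
  · rintro _ ⟨a, ha, rfl⟩ hnu
    have hu : IsUnit a := not_not.mp ((ValuationRing.algebraMap_mem_nonunits_iff a).not.mp hnu)
    refine ⟨↑hu.unit⁻¹, ?_, map_units_inv (algebraMap A K) hu.unit⟩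
    change φ ↑hu.unit⁻¹ ∈ k
    rw [map_units_inv φ hu.unit]
    exact k.inv_mem ha

/-- Let `R` be a pseudo-valuation domain which is a Mori domain, with associated valuation
overring `V` and maximal ideal `M` (so `R = φ⁻¹(k)` for a subfield `k` of `V/M`).  Then every
well-centered overring of `R` is a Mori domain. -/
theorem PVD_Mori_wellCentered_overring_is_Mori
    (V : Type*) [CommRing V] [IsDomain V] [ValuationRing V]
    (M : Ideal V) [hM : M.IsMaximal] (hMmax : M = IsLocalRing.maximalIdeal V)
    (R : Subring V)
    (hR : letI : Field (V ⧸ M) := Ideal.Quotient.field M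
      ∃ k : Subfield (V ⧸ M), R = Subring.comap (Ideal.Quotient.mk M) k.toSubring)
    (R' : Subring (FractionRing V))
    (hR' : R' = Subring.map (algebraMap V (FractionRing V)) R)
    (hMori : IsMoriDomain R') :
    ∀ S : Subring (FractionRing V), R' ≤ S →
      (∀ b : S, ∃ u : Sˣ, (((u : S) * b : S) : FractionRing V) ∈ R') →
      IsMoriDomain S := by
  let : Field (V ⧸ M) := Ideal.Quotient.field M
  obtain ⟨k, rfl⟩ := hR
  subst hR'
  set W := (ValuationRing.valuation V (FractionRing V)).valuationSubring
  have hT : IsPseudoValuationSubring W _ :=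
    isPseudoValuationSubring_map_comap _ (by rw [Ideal.mk_ker, hMmax]) k
  intro S hTS hwc
  by_cases hSW : S ≤ W.toSubring
  · have hS := hT.of_le_of_wellCentered hTS hSW hwc
    by_cases hW : W = ⊤
    · exact .of_isField (hS.isField_of_eq_top hW)
    · have := hT.wfDvdMonoid hW hMori
      exact hS.isMoriDomain hW
  · have hW : W ≠ ⊤ := fun h => hSW fun z _ => h ▸ ValuationSubring.mem_top z
    have := hT.wfDvdMonoid hW hMori
    have hWS := lt_of_le_not_ge (hT.toSubring_le_of_not_le hTS hSW) hSW
    exact .of_isField (Subring.isField_of_forall_inv_mem fun _ => W.inv_mem_of_toSubring_lt hWS)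
end

section
/- Let R be a pseudo-valuation domain with associated valuation overring V (a DVR), maximal ideal M, quotient map φ : V → K = V/M, and R = φ⁻¹(k) for a subfield k of K. If T = φ⁻¹(B) is a well-centered overring of R for some ring B with k ⊆ B ⊆ K, then B is a field. -/
/-! Write `b ∈ B` as `φ v` with `v ∈ T`. Well-centeredness gives a unit `u` of `T` with
`u v ∈ R`, so `c := φ(u) b` lies in `k`. Since `u` is a unit, `φ(u) ≠ 0`; hence for `b ≠ 0`
also `c ≠ 0`, and `b⁻¹ = φ(u) c⁻¹ ∈ B` because `k ⊆ B`. -/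

def Subring.IsWellCenteredOn_s8 {A : Type*} [CommRing A] (T R : Subring A) : Prop :=
  ∀ b : T, ∃ u : Tˣ, (((u : T) * b : T) : A) ∈ R

theorem Subring.isField_of_inv_mem {F : Type*} [Field F] (B : Subring F)
    (hinv : ∀ x ∈ B, x⁻¹ ∈ B) : IsField B where
  exists_pair_ne := ⟨0, 1, zero_ne_one⟩
  mul_comm := mul_comm
  mul_inv_cancel {b} hb :=
    ⟨⟨b⁻¹, hinv b b.2⟩, Subtype.ext (mul_inv_cancel₀ (Subtype.coe_ne_coe.mpr hb))⟩

theorem Subring.inv_mem_of_mul_mem_subfield {F : Type*} [Field F] {k : Subfield F}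
    {B : Subring F} (hkB : k.toSubring ≤ B) {w b : F} (hw : w ∈ B) (hw0 : w ≠ 0)
    (hwb : w * b ∈ k) : b⁻¹ ∈ B := by
  rcases eq_or_ne b 0 with rfl | hb0
  · simp
  have hb_inv : b⁻¹ = w * (w * b)⁻¹ := by field_simp
  exact hb_inv ▸ B.mul_mem hw (hkB (k.inv_mem hwb))

theorem Subring.inv_mem_of_isWellCenteredOn_comap {A F : Type*} [CommRing A] [Field F]
    {φ : A →+* F} (hφ : Function.Surjective φ) {k : Subfield F} {B : Subring F}
    (hkB : k.toSubring ≤ B) (hwc : (B.comap φ).IsWellCenteredOn_s8 (k.toSubring.comap φ))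
    (b : F) (hb : b ∈ B) : b⁻¹ ∈ B := by
  obtain ⟨v, rfl⟩ := hφ b
  obtain ⟨u, hu⟩ := hwc ⟨v, hb⟩
  have hu0 : φ (u : B.comap φ) ≠ 0 :=
    ((u.map (B.comap φ).subtype.toMonoidHom).isUnit.map φ).ne_zero
  refine inv_mem_of_mul_mem_subfield hkB (u : B.comap φ).2 hu0 ?_
  simpa only [Subring.mem_comap, Subring.coe_mul, map_mul, Subfield.mem_toSubring] using hu

theorem DVR_pullback_wellCentered_implies_field_general
    (V : Type*) [CommRing V]
    (M : Ideal V) [hM : M.IsMaximal]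
    (B : Subring (V ⧸ M)) (R T : Subring V)
    (hT : T = Subring.comap (Ideal.Quotient.mk M) B)
    (hwc : ∀ b : T, ∃ u : Tˣ, (((u : T) * b : T) : V) ∈ R) :
    letI : Field (V ⧸ M) := Ideal.Quotient.field M
    ∀ k : Subfield (V ⧸ M), k.toSubring ≤ B →
      R = Subring.comap (Ideal.Quotient.mk M) k.toSubring →
      IsField B := by
  intro k hkB hR
  let _ : Field (V ⧸ M) := Ideal.Quotient.field M
  subst hT hR
  exact B.isField_of_inv_mem
    (Subring.inv_mem_of_isWellCenteredOn_comap Ideal.Quotient.mk_surjective hkB hwc)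

/-- Let `V` be a DVR with maximal ideal `M`, `φ : V → K = V/M` the quotient map, `k` a
subfield of `K`, `R = φ⁻¹(k)`, and `B` an intermediate ring `k ⊆ B ⊆ K`.  If `T = φ⁻¹(B)`
is well-centered on `R`, then `B` is a field. -/
theorem DVR_pullback_wellCentered_implies_field
    (V : Type*) [CommRing V] [IsDomain V] [IsDiscreteValuationRing V]
    (M : Ideal V) [hM : M.IsMaximal] (hMmax : M = IsLocalRing.maximalIdeal V)
    (B : Subring (V ⧸ M)) (R T : Subring V)
    (hT : T = Subring.comap (Ideal.Quotient.mk M) B)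
    (hwc : ∀ b : T, ∃ u : Tˣ, (((u : T) * b : T) : V) ∈ R) :
    letI : Field (V ⧸ M) := Ideal.Quotient.field M
    ∀ k : Subfield (V ⧸ M), k.toSubring ≤ B →
      R = Subring.comap (Ideal.Quotient.mk M) k.toSubring →
      IsField B :=
  DVR_pullback_wellCentered_implies_field_general V M (hM := hM) B R T hT hwc
end

section
/- Let A be a commutative ring, Tot(A) its total quotient ring, E a Tot(A)-module, and R = A ⋉ E the trivial (Nagata idealization) extension. If B is an overring of A (A ⊆ B ⊆ Tot(A)), then B ⋉ E is an overring of R, i.e. R ⊆ B ⋉ E ⊆ Tot(R). -/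
open TrivSqZeroExt

/-- For a module over a commutative ring, the canonical right (opposite) module structure. -/
noncomputable instance commMopModule (K : Type*) [CommRing K] (E : Type*) [AddCommGroup E]
    [Module K E] : Module Kᵐᵒᵖ E :=
  Module.compHom E ((RingHom.id K).fromOpposite mul_comm)

instance commMopCentral (K : Type*) [CommRing K] (E : Type*) [AddCommGroup E] [Module K E] :
    IsCentralScalar K E :=
  ⟨fun _ _ => rfl⟩

/-- The first projection of a trivial extension, as a ring homomorphism. -/
noncomputable def fstRingHom (K : Type*) [CommRing K] (E : Type*) [AddCommGroup E]
    [Module K E] : TrivSqZeroExt K E →+* K where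
  toFun := fst
  map_one' := rfl
  map_mul' := fst_mul
  map_zero' := rfl
  map_add' := fst_add

theorem TrivSqZeroExt.exists_fst_inl_algebraMap_mul_mem_range {R S : Type*} [CommRing R]
    [CommRing S] [Algebra R S] (M : Submonoid R) [IsLocalization M S] {E : Type*}
    [AddZeroClass E] [SMul S E] [SMul Sᵐᵒᵖ E] (x : TrivSqZeroExt S E) :
    ∃ m ∈ M, fst (inl (algebraMap R S m) * x) ∈ (algebraMap R S).range := by
  obtain ⟨⟨r, m⟩, hx⟩ := IsLocalization.surj M (fst x)
  exact ⟨m, m.2, r, by rw [fst_mul, fst_inl, mul_comm, hx]⟩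

/-- If `E` is a `Tot(A)`-module and `B` an overring of `A`, then `B ⋉ E` is an overring of
`R = A ⋉ E`: it is a subring of `Tot(A) ⋉ E` containing `R`, each of whose elements is a
fraction over `R` with regular denominator in `R`. -/
theorem trivial_extension_of_overring_is_overring
    (A : Type*) [CommRing A] (E : Type*) [AddCommGroup E] [Module (FractionRing A) E]
    (B : Subring (FractionRing A)) (hB : (algebraMap A (FractionRing A)).range ≤ B)
    (R : Subring (TrivSqZeroExt (FractionRing A) E))
    (hR : ∀ x, x ∈ R ↔ fst x ∈ (algebraMap A (FractionRing A)).range) :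
    ∃ S : Subring (TrivSqZeroExt (FractionRing A) E),
      (∀ x, x ∈ S ↔ fst x ∈ B) ∧ R ≤ S ∧
      ∀ x ∈ S, ∃ s ∈ R, (∀ y ∈ R, s * y = 0 → y = 0) ∧ s * x ∈ R := by
  refine ⟨B.comap (fstRingHom (FractionRing A) E), fun _ => Iff.rfl,
    fun x hx => hB ((hR x).1 hx), fun x _ => ?_⟩
  obtain ⟨s, hs, hsx⟩ := exists_fst_inl_algebraMap_mul_mem_range (nonZeroDivisors A) x
  -- `inl s` is a unit of `Tot(A) ⋉ E`, hence regular there and a fortiori in `R`.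
  have hunit :
      IsUnit (inl (algebraMap A (FractionRing A) s) : TrivSqZeroExt (FractionRing A) E) :=
    isUnit_inl_iff.mpr (IsLocalization.map_units _ ⟨s, hs⟩)
  exact ⟨_, (hR _).2 ⟨s, (fst_inl E _).symm⟩, fun _ _ => hunit.mul_right_eq_zero.mp,
    (hR _).2 hsx⟩
end

section
/- Let A be a commutative ring, E a Tot(A)-module, and R = A ⋉ E. Then the total quotient ring of R is Tot(A) ⋉ E; equivalently, every element of Tot(A) ⋉ E is a unit or a zerodivisor, and every regular element of R becomes invertible in Tot(A) ⋉ E. -/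
/-!
If `fst x * y = 0` with `y ≠ 0`, then `x` is a zero divisor of `K ⋉ E`, killed either by `(y, 0)`
or by `(0, y • snd x)`. Since every element of `Tot(A)` is a unit or a zero divisor, so is every
element of `Tot(A) ⋉ E`. A regular `s ∈ A ⋉ E` has `fst s = a` with `a` regular in `A` (both
annihilators above lie in `A ⋉ E` when `y ∈ A`), so `fst s` and hence `s` is a unit.
-/

open TrivSqZeroExt

theorem IsFractionRing.isUnit_or_exists_mul_eq_zero (R : Type*) {K : Type*} [CommRing R]
    [CommRing K] [Algebra R K] [IsFractionRing R K] (x : K) :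
    IsUnit x ∨ ∃ y ≠ 0, x * y = 0 := by
  by_cases hx : x ∈ nonZeroDivisors K
  · rw [IsFractionRing.nonZeroDivisors_eq_isUnit R K] at hx
    exact Or.inl hx
  · obtain ⟨y, hxy, hy⟩ := notMem_nonZeroDivisors_iff_left.mp hx
    exact Or.inr ⟨y, hy, hxy⟩

namespace TrivSqZeroExt

variable {K E : Type*}

theorem exists_ne_zero_mul_eq_zero_of_fst_mul_eq_zero [CommSemiring K] [AddCommMonoid E]
    [Module K E] [Module Kᵐᵒᵖ E] [IsCentralScalar K E] (x : TrivSqZeroExt K E) {y : K}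
    (hy : y ≠ 0) (hxy : x.fst * y = 0) :
    ∃ z ≠ 0, x * z = 0 ∧ (z.fst = y ∨ z.fst = 0) := by
  by_cases hys : y • x.snd = 0
  · refine ⟨inl y, fun h => hy (congrArg fst h), ?_, Or.inl rfl⟩
    ext
    · exact hxy
    · simp [op_smul_eq_smul, hys]
  · refine ⟨inr (y • x.snd), fun h => hys (congrArg snd h), ?_, Or.inr rfl⟩
    ext
    · simp
    · simp [smul_smul, mul_comm y, hxy]

theorem isUnit_or_exists_mul_eq_zero [CommRing K] [AddCommGroup E] [Module K E] [Module Kᵐᵒᵖ E]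
    [IsCentralScalar K E] (hK : ∀ k : K, IsUnit k ∨ ∃ y ≠ 0, k * y = 0)
    (x : TrivSqZeroExt K E) : IsUnit x ∨ ∃ z ≠ 0, x * z = 0 := by
  rw [isUnit_iff_isUnit_fst]
  refine (hK x.fst).imp_right fun ⟨y, hy, hxy⟩ => ?_
  obtain ⟨z, hz, hxz, -⟩ := exists_ne_zero_mul_eq_zero_of_fst_mul_eq_zero x hy hxy
  exact ⟨z, hz, hxz⟩

end TrivSqZeroExt

/-- If `E` is a `Tot(A)`-module and `R = A ⋉ E`, then `Tot(A) ⋉ E` is the total quotient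
ring of `R`: every element of `Tot(A) ⋉ E` is a unit or a zerodivisor, and every regular
element of `R` is invertible in `Tot(A) ⋉ E`. -/
theorem total_quotient_ring_of_trivial_extension
    (A : Type*) [CommRing A] (E : Type*) [AddCommGroup E] [Module (FractionRing A) E]
    (R : Subring (TrivSqZeroExt (FractionRing A) E))
    (hR : ∀ x, x ∈ R ↔ fst x ∈ (algebraMap A (FractionRing A)).range) :
    (∀ x : TrivSqZeroExt (FractionRing A) E, IsUnit x ∨ ∃ y ≠ 0, x * y = 0) ∧
    (∀ s ∈ R, (∀ y ∈ R, s * y = 0 → y = 0) → IsUnit s) := by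
  refine ⟨isUnit_or_exists_mul_eq_zero (IsFractionRing.isUnit_or_exists_mul_eq_zero A),
    fun s hs hreg => ?_⟩
  obtain ⟨a, ha⟩ := (hR s).mp hs
  suffices a ∈ nonZeroDivisors A by
    rw [isUnit_iff_isUnit_fst, ← ha]
    exact IsLocalization.map_units (FractionRing A) ⟨a, this⟩
  refine mem_nonZeroDivisors_iff_right.mpr fun b hba => by_contra fun hb => ?_
  have hsb : s.fst * algebraMap A (FractionRing A) b = 0 := by
    rw [← ha, ← map_mul, mul_comm, hba, map_zero]
  obtain ⟨z, hz, hsz, hzfst⟩ := exists_ne_zero_mul_eq_zero_of_fst_mul_eq_zero s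
    ((IsFractionRing.to_map_eq_zero_iff).not.mpr hb) hsb
  have hzR : z ∈ R := (hR z).mpr <| hzfst.elim (fun h => ⟨b, h.symm⟩) fun h => ⟨0, by simp [h]⟩
  exact hz (hreg z hzR hsz)
end

section
/- Let A be a commutative ring, E a Tot(A)-module, and R = A ⋉ E. Every overring S of R (R ⊆ S ⊆ Tot(R)) is of the form S = B ⋉ E for a unique overring B of A. -/
open TrivSqZeroExt

/-! A subring `S` of `K ⋉ E` containing `0 ⋉ E` is determined by its image `B` under `fst`:
`x = (fst x, 0) + (0, snd x)` with `(0, snd x) ∈ S`, so `S = B ⋉ E`. An overring of `A ⋉ E`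
contains `0 ⋉ E`. -/

section

variable {K : Type*} [CommRing K] {E : Type*} [AddCommGroup E] [Module K E]

theorem mem_iff_fst_mem_map_fstRingHom {S : Subring (TrivSqZeroExt K E)}
    (hS : ∀ e : E, inr e ∈ S) (x : TrivSqZeroExt K E) :
    x ∈ S ↔ fst x ∈ S.map (fstRingHom K E) := by
  refine ⟨fun hx => ⟨x, hx, rfl⟩, ?_⟩
  rintro ⟨y, hy, hyx : fst y = fst x⟩
  have hx : x = y + inr (snd x - snd y) := by
    ext
    · simpa using hyx.symm
    · simp
  exact hx ▸ S.add_mem hy (hS _)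

theorem eq_map_fstRingHom_of_mem_iff {S : Subring (TrivSqZeroExt K E)} {B : Subring K}
    (h : ∀ x, x ∈ S ↔ fst x ∈ B) : B = S.map (fstRingHom K E) := by
  ext b
  refine ⟨fun hb => ⟨inl b, (h _).2 hb, rfl⟩, ?_⟩
  rintro ⟨x, hx, rfl⟩
  exact (h x).1 hx

end

/-- If `E` is a `Tot(A)`-module and `R = A ⋉ E`, then every overring `S` of `R`
(inside `Tot(R) = Tot(A) ⋉ E`) is of the form `B ⋉ E` for a unique overring `B` of `A`. -/
theorem overrings_of_trivial_extension
    (A : Type*) [CommRing A] (E : Type*) [AddCommGroup E] [Module (FractionRing A) E]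
    (R : Subring (TrivSqZeroExt (FractionRing A) E))
    (hR : ∀ x, x ∈ R ↔ fst x ∈ (algebraMap A (FractionRing A)).range)
    (S : Subring (TrivSqZeroExt (FractionRing A) E)) (hS : R ≤ S) :
    ∃! B : Subring (FractionRing A),
      (algebraMap A (FractionRing A)).range ≤ B ∧ ∀ x, x ∈ S ↔ fst x ∈ B := by
  have hinr : ∀ e : E, inr e ∈ S := fun e => hS ((hR _).2 ⟨0, by simp⟩)
  have hinl : ∀ a : A, inl (algebraMap A (FractionRing A) a) ∈ S :=
    fun a => hS ((hR _).2 ⟨a, rfl⟩)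
  refine ⟨S.map (fstRingHom _ E), ⟨?_, mem_iff_fst_mem_map_fstRingHom hinr⟩,
    fun B hB => eq_map_fstRingHom_of_mem_iff hB.2⟩
  rintro _ ⟨a, rfl⟩
  exact ⟨_, hinl a, rfl⟩
end

section
/- Let A be a commutative ring with overrings B and C satisfying A ⊆ B ⊊ C ⊆ Tot(A). Set R = A ⋉ B and S = B ⋉ C (trivial extensions). Then S is not well-centered on R: for any c ∈ C \ B, no unit multiple of (0,c) in S lies in R. -/
open TrivSqZeroExt

/-! A unit `(u, v)` of `B ⋉ C` multiplies `(0, c)` to `(0, u c)`, and `u` is a unit of `B`;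
so `u c ∈ B` forces `c ∈ B`. Hence `(0, c)` with `c ∈ C \ B` has no unit multiple in `A ⋉ B`. -/

theorem Subring.mem_of_mul_mem_of_mul_eq_one {K : Type*} [CommRing K] (B : Subring K)
    {a b c : K} (hb : b ∈ B) (hab : a * b = 1) (hac : a * c ∈ B) : c ∈ B := by
  have hbac : b * (a * c) ∈ B := B.mul_mem hb hac
  rwa [← mul_assoc, mul_comm b a, hab, one_mul] at hbac

namespace TrivSqZeroExt

variable {K E : Type*} [CommRing K] [AddCommGroup E] [Module K E]

theorem snd_mul_inr (x : TrivSqZeroExt K E) (m : E) : snd (x * inr m) = fst x • m := by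
  rw [snd_mul, fst_inr, snd_inr, MulOpposite.op_zero]
  exact add_eq_left.2 (zero_smul K x.snd)

theorem fst_mul_fst_eq_one {u v : TrivSqZeroExt K E} (huv : u * v = 1) : fst u * fst v = 1 := by
  rw [← fst_mul, huv, fst_one]

theorem mem_of_snd_mul_inr_mem (B : Subring K) {u v : TrivSqZeroExt K K} (huv : u * v = 1)
    (hv : fst v ∈ B) {c : K} (hc : snd (u * inr c) ∈ B) : c ∈ B :=
  B.mem_of_mul_mem_of_mul_eq_one hv (fst_mul_fst_eq_one huv) (by rwa [snd_mul_inr, smul_eq_mul] at hc)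

end TrivSqZeroExt

theorem trivial_extension_never_wellCentered_general
    (A : Type*) [CommRing A]
    (B C : Subring (FractionRing A))
    (hBC : B < C)
    (Rset Sset : Set (TrivSqZeroExt (FractionRing A) (FractionRing A)))
    (hRset : ∀ x, x ∈ Rset ↔
      fst x ∈ (algebraMap A (FractionRing A)).range ∧ snd x ∈ B)
    (hSset : ∀ x, x ∈ Sset ↔ fst x ∈ B ∧ snd x ∈ C) :
    (∀ c : FractionRing A, c ∈ C → c ∉ B →
      ¬ ∃ u, u ∈ Sset ∧ (∃ v ∈ Sset, u * v = 1) ∧ u * inr c ∈ Rset) ∧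
    ¬ (∀ s ∈ Sset, ∃ u, u ∈ Sset ∧ (∃ v ∈ Sset, u * v = 1) ∧ u * s ∈ Rset) := by
  have no_unit_multiple : ∀ c : FractionRing A, c ∈ C → c ∉ B →
      ¬ ∃ u, u ∈ Sset ∧ (∃ v ∈ Sset, u * v = 1) ∧ u * inr c ∈ Rset := by
    rintro c - hcB ⟨u, -, ⟨v, hvS, huv⟩, huc⟩
    exact hcB (mem_of_snd_mul_inr_mem B huv ((hSset v).1 hvS).1 ((hRset _).1 huc).2)
  refine ⟨no_unit_multiple, fun hwell => ?_⟩
  obtain ⟨c, hcC, hcB⟩ := SetLike.exists_of_lt hBC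
  have hcS : inr c ∈ Sset := (hSset _).2 ⟨B.zero_mem, hcC⟩
  exact no_unit_multiple c hcC hcB (hwell _ hcS)

/-- Let `A ⊆ B ⊊ C ⊆ Tot(A)` be overrings, `R = A ⋉ B` and `S = B ⋉ C` (inside
`Tot(A) ⋉ Tot(A)`).  Then `S` is not well-centered on `R`: for `c ∈ C \ B`, no unit
multiple of `(0, c)` in `S` lies in `R`. -/
theorem trivial_extension_never_wellCentered
    (A : Type*) [CommRing A]
    (B C : Subring (FractionRing A))
    (hAB : (algebraMap A (FractionRing A)).range ≤ B) (hBC : B < C)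
    (Rset Sset : Set (TrivSqZeroExt (FractionRing A) (FractionRing A)))
    (hRset : ∀ x, x ∈ Rset ↔
      fst x ∈ (algebraMap A (FractionRing A)).range ∧ snd x ∈ B)
    (hSset : ∀ x, x ∈ Sset ↔ fst x ∈ B ∧ snd x ∈ C) :
    (∀ c : FractionRing A, c ∈ C → c ∉ B →
      ¬ ∃ u, u ∈ Sset ∧ (∃ v ∈ Sset, u * v = 1) ∧ u * inr c ∈ Rset) ∧
    ¬ (∀ s ∈ Sset, ∃ u, u ∈ Sset ∧ (∃ v ∈ Sset, u * v = 1) ∧ u * s ∈ Rset) :=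
  trivial_extension_never_wellCentered_general A B C hBC Rset Sset hRset hSset
end

section
/- Let A be a commutative ring, E a Tot(A)-module, R = A ⋉ E. Every finitely generated well-centered overring of R is a localization of R (at some multiplicative set of R) if and only if every finitely generated well-centered overring of A is a localization of A. -/
open TrivSqZeroExt

/-- `S` is well-centered on `R` (subrings of an ambient commutative ring). -/
def WellCentered {W : Type*} [CommRing W] (R S : Subring W) : Prop :=
  ∀ x ∈ S, ∃ u, u ∈ S ∧ (∃ v ∈ S, u * v = 1) ∧ u * x ∈ R

/-- `S` is a finitely generated `R`-module (subrings of an ambient commutative ring). -/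
def FGOver {W : Type*} [CommRing W] (R S : Subring W) : Prop :=
  ∃ (n : ℕ) (g : Fin n → W), (∀ i, g i ∈ S) ∧
    ∀ x ∈ S, ∃ r : Fin n → W, (∀ i, r i ∈ R) ∧ x = ∑ i, r i * g i

/-- `S` is a localization of `R` at a multiplicative subset of `R`. -/
def IsLocalizationOf {W : Type*} [CommRing W] (R S : Subring W) : Prop :=
  ∃ U : Submonoid W, (U : Set W) ⊆ R ∧ (∀ u ∈ U, ∃ v ∈ S, u * v = 1) ∧
    ∀ x, x ∈ S ↔ ∃ a ∈ R, ∃ u ∈ U, x * u = a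

/-! The first projection `A ⋉ E → Tot(A)` is a split surjection of rings whose kernel `0 ⋉ E`
lies in `R`, so `R` is the preimage of `A`. Overrings of `R` are then exactly the preimages of
overrings of `A`, and being finitely generated, well-centered, or a localization passes back and
forth between an overring of `A` and its preimage, by mapping data down along the projection and
lifting it back along the section. -/

section SplitSurjection

variable {W K : Type*} [CommRing W] [CommRing K] {φ : W →+* K} {σ : K →+* W}

theorem Subring.comap_map_eq_of_comap_le {A : Subring K} {S : Subring W}
    (hS : A.comap φ ≤ S) : (S.map φ).comap φ = S := by
  refine le_antisymm ?_ fun x hx => ⟨x, hx, rfl⟩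
  rintro x ⟨y, hy, hyx⟩
  have hxy : x - y ∈ A.comap φ := by
    rw [Subring.mem_comap, map_sub, hyx, sub_self]
    exact A.zero_mem
  simpa using S.add_mem hy (hS hxy)

theorem Subring.le_map_of_comap_le (hφ : Function.Surjective φ) {A : Subring K} {S : Subring W}
    (hS : A.comap φ ≤ S) : A ≤ S.map φ := by
  intro a ha
  obtain ⟨x, rfl⟩ := hφ a
  exact ⟨x, hS ha, rfl⟩

theorem fgOver_comap_iff (hσ : Function.LeftInverse φ σ) (A B : Subring K) :
    FGOver (A.comap φ) (B.comap φ) ↔ FGOver A B := by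
  constructor
  · rintro ⟨n, g, hg, hgen⟩
    refine ⟨n, fun i => φ (g i), hg, fun b hb => ?_⟩
    obtain ⟨r, hr, hbr⟩ := hgen (σ b) (by simpa [Subring.mem_comap, hσ b] using hb)
    refine ⟨fun i => φ (r i), hr, ?_⟩
    simpa [hσ b] using congrArg φ hbr
  · rintro ⟨n, g, hg, hgen⟩
    refine ⟨n + 1, Fin.cons 1 fun i => σ (g i), ?_, fun x hx => ?_⟩
    · refine Fin.cases (B.comap φ).one_mem fun i => ?_
      simpa [Subring.mem_comap, hσ (g i)] using hg i
    obtain ⟨r, hr, hxr⟩ := hgen (φ x) hx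
    -- the error term lies in the kernel of `φ`, hence in `A.comap φ`
    refine ⟨Fin.cons (x - ∑ i, σ (r i) * σ (g i)) fun i => σ (r i), ?_, ?_⟩
    · refine Fin.cases ?_ fun i => ?_
      · simp [Subring.mem_comap, hσ _, ← hxr]
      · simpa [Subring.mem_comap, hσ (r i)] using hr i
    · simp [Fin.sum_univ_succ]

theorem wellCentered_comap_iff (hσ : Function.LeftInverse φ σ) (A B : Subring K) :
    WellCentered (A.comap φ) (B.comap φ) ↔ WellCentered A B := by
  constructor
  · intro h b hb
    obtain ⟨u, hu, ⟨v, hv, huv⟩, hux⟩ := h (σ b) (by simpa [Subring.mem_comap, hσ b] using hb)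
    refine ⟨φ u, hu, ⟨φ v, hv, by rw [← map_mul, huv, map_one]⟩, ?_⟩
    simpa [Subring.mem_comap, hσ b] using hux
  · intro h x hx
    obtain ⟨u, hu, ⟨v, hv, huv⟩, hux⟩ := h (φ x) hx
    refine ⟨σ u, by simpa [Subring.mem_comap, hσ u] using hu,
      ⟨σ v, by simpa [Subring.mem_comap, hσ v] using hv, by rw [← map_mul, huv, map_one]⟩, ?_⟩
    simpa [Subring.mem_comap, hσ u] using hux

theorem isLocalizationOf_comap_iff (hσ : Function.LeftInverse φ σ) (A B : Subring K) :
    IsLocalizationOf (A.comap φ) (B.comap φ) ↔ IsLocalizationOf A B := by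
  constructor
  · rintro ⟨U, hUA, hUinv, hU⟩
    refine ⟨U.map φ, ?_, ?_, fun b => ?_⟩
    · rintro _ ⟨u, hu, rfl⟩
      exact hUA hu
    · rintro _ ⟨u, hu, rfl⟩
      obtain ⟨v, hv, huv⟩ := hUinv u hu
      exact ⟨φ v, hv, by rw [← map_mul, huv, map_one]⟩
    have hb : b ∈ B ↔ σ b ∈ B.comap φ := by rw [Subring.mem_comap, hσ b]
    rw [hb, hU]
    constructor
    · rintro ⟨a, ha, u, hu, hbu⟩
      exact ⟨φ a, ha, φ u, ⟨u, hu, rfl⟩, by rw [← hbu, map_mul, hσ b]⟩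
    · rintro ⟨a, ha, _, ⟨u, hu, rfl⟩, hbu⟩
      exact ⟨σ b * u, by simpa [Subring.mem_comap, hσ b, hbu] using ha, u, hu, rfl⟩
  · rintro ⟨U, hUA, hUinv, hU⟩
    refine ⟨U.map σ, ?_, ?_, fun x => ?_⟩
    · rintro _ ⟨u, hu, rfl⟩
      simpa [Subring.mem_comap, hσ u] using hUA hu
    · rintro _ ⟨u, hu, rfl⟩
      obtain ⟨v, hv, huv⟩ := hUinv u hu
      exact ⟨σ v, by simpa [Subring.mem_comap, hσ v] using hv, by rw [← map_mul, huv, map_one]⟩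
    rw [Subring.mem_comap, hU]
    constructor
    · rintro ⟨a, ha, u, hu, hxu⟩
      exact ⟨x * σ u, by simpa [Subring.mem_comap, hσ u, hxu] using ha, σ u, ⟨u, hu, rfl⟩, rfl⟩
    · rintro ⟨a, ha, _, ⟨u, hu, rfl⟩, hxu⟩
      exact ⟨φ a, ha, u, hu, by simpa [hσ u] using congrArg φ hxu⟩

theorem forall_overring_comap_iff (hσ : Function.LeftInverse φ σ) (A : Subring K) :
    (∀ S : Subring W, A.comap φ ≤ S →
        FGOver (A.comap φ) S → WellCentered (A.comap φ) S → IsLocalizationOf (A.comap φ) S) ↔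
    (∀ B : Subring K, A ≤ B → FGOver A B → WellCentered A B → IsLocalizationOf A B) := by
  constructor
  · intro h B hAB
    rw [← fgOver_comap_iff hσ, ← wellCentered_comap_iff hσ, ← isLocalizationOf_comap_iff hσ]
    exact h _ fun x hx => hAB hx
  · intro h S hAS
    rw [← Subring.comap_map_eq_of_comap_le hAS, fgOver_comap_iff hσ, wellCentered_comap_iff hσ,
      isLocalizationOf_comap_iff hσ]
    exact h _ (Subring.le_map_of_comap_le hσ.surjective hAS)

end SplitSurjection

/-- For `R = A ⋉ E` with `E` a `Tot(A)`-module: every finitely generated well-centered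
overring of `R` is a localization of `R` iff every finitely generated well-centered overring
of `A` is a localization of `A`. -/
theorem trivial_extension_fg_wellCentered_localization_iff
    (A : Type*) [CommRing A] (E : Type*) [AddCommGroup E] [Module (FractionRing A) E]
    (R : Subring (TrivSqZeroExt (FractionRing A) E))
    (hR : ∀ x, x ∈ R ↔ fst x ∈ (algebraMap A (FractionRing A)).range) :
    (∀ S : Subring (TrivSqZeroExt (FractionRing A) E), R ≤ S →
        FGOver R S → WellCentered R S → IsLocalizationOf R S) ↔
    (∀ B : Subring (FractionRing A), (algebraMap A (FractionRing A)).range ≤ B →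
        FGOver (algebraMap A (FractionRing A)).range B →
        WellCentered (algebraMap A (FractionRing A)).range B →
        IsLocalizationOf (algebraMap A (FractionRing A)).range B) := by
  obtain rfl : R = (algebraMap A (FractionRing A)).range.comap (fstRingHom _ E) := Subring.ext hR
  exact forall_overring_comap_iff (σ := inlHom _ E) (fun k => fst_inl E k) _
end

section
/- Let A be a commutative ring, E a Tot(A)-module, R = A ⋉ E. Every flat overring of R is well-centered on R if and only if every flat overring of A is well-centered on A. -/
/-!
Write `K = Tot(A)`. An overring of `A ⋉ E` inside `K ⋉ E` contains `0 ⋉ E`, hence is `B ⋉ E` for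
the overring `B = fst(S)` of `A`, and `fst`, `inl` transport units and well-centeredness both ways.
For flatness, `B` is the base change `A ⊗_{A ⋉ E} (B ⋉ E)` (kill `0 ⋉ E`), and `B ⋉ E` is the
base change `(A ⋉ E) ⊗_A B`: every element of the latter is `(0, e) ⊗ 1 + 1 ⊗ b`, because `E` is a
`K`-module and each `b ∈ B` is a fraction `a / t` of `A`, so `(0, e) ⊗ b = (0, b e) ⊗ 1`.
-/

open TrivSqZeroExt

open TensorProduct

theorem TensorProduct.exists_eq_one_tmul_of_surjective {R A M : Type*} [CommSemiring R]
    [Semiring A] [Algebra R A] [AddCommMonoid M] [Module R M]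
    (hA : Function.Surjective (algebraMap R A)) (z : A ⊗[R] M) : ∃ m, z = 1 ⊗ₜ m := by
  induction z with
  | zero => exact ⟨0, (tmul_zero _ _).symm⟩
  | tmul a m =>
    obtain ⟨r, rfl⟩ := hA a
    exact ⟨r • m, by rw [Algebra.algebraMap_eq_smul_one, smul_tmul]⟩
  | add x y hx hy =>
    obtain ⟨m, rfl⟩ := hx
    obtain ⟨n, rfl⟩ := hy
    exact ⟨m + n, (tmul_add _ _ _).symm⟩

namespace TrivSqZeroExt

variable {K : Type*} [CommRing K] {E : Type*} [AddCommGroup E] [Module K E]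

@[simp]
theorem fstRingHom_apply (x : TrivSqZeroExt K E) : fstRingHom K E x = fst x :=
  rfl

@[simp]
theorem inr_mem_comap_fstRingHom (B : Subring K) (e : E) : inr e ∈ B.comap (fstRingHom K E) := by
  simp [B.zero_mem]

theorem comap_map_fstRingHom {S : Subring (TrivSqZeroExt K E)} (hS : ∀ e : E, inr e ∈ S) :
    (S.map (fstRingHom K E)).comap (fstRingHom K E) = S := by
  refine le_antisymm (fun x ⟨s, hs, hsx⟩ => ?_) fun x hx => ⟨x, hx, rfl⟩
  have : x = s + inr (snd x - snd s) := by
    ext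
    · simpa using hsx.symm
    · simp
  exact this ▸ S.add_mem hs (hS _)

theorem wellCentered_comap_fstRingHom_iff {A B : Subring K} :
    WellCentered (A.comap (fstRingHom K E)) (B.comap (fstRingHom K E)) ↔ WellCentered A B := by
  constructor
  · intro h b hb
    obtain ⟨u, hu, ⟨v, hv, huv⟩, hux⟩ := h (inl b) (by simpa using hb)
    exact ⟨fst u, hu, ⟨fst v, hv, by simpa using congr_arg fst huv⟩, by simpa using hux⟩
  · intro h x hx
    obtain ⟨u, hu, ⟨v, hv, huv⟩, hux⟩ := h (fst x) hx
    exact ⟨inl u, by simpa using hu, ⟨inl v, by simpa using hv, by rw [inl_mul_inl, huv, inl_one]⟩,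
      by simpa using hux⟩

variable (E)

noncomputable def fstComap (B : Subring K) : B.comap (fstRingHom K E) →+* B :=
  (fstRingHom K E).restrict _ B fun _ h => h

noncomputable def inlComap (B : Subring K) : B →+* B.comap (fstRingHom K E) :=
  (inlHom K E).restrict B _ fun x hx => by simpa using hx

noncomputable def inrComap (B : Subring K) : E →+ B.comap (fstRingHom K E) :=
  (inrHom K E).toAddMonoidHom.codRestrict _ (inr_mem_comap_fstRingHom B)

variable {E}

theorem fstComap_surjective (B : Subring K) : Function.Surjective (fstComap E B) :=
  fun b => ⟨inlComap E B b, Subtype.ext (fst_inl E b.1)⟩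

theorem _root_.RingHom.Flat.of_inclusion_comap_fstRingHom {A B : Subring K} (h : A ≤ B)
    (hf : (Subring.inclusion ((Subring.gc_map_comap (fstRingHom K E)).monotone_u h)).Flat) :
    (Subring.inclusion h).Flat := by
  set R := A.comap (fstRingHom K E)
  set S := B.comap (fstRingHom K E)
  have hRS : R ≤ S := (Subring.gc_map_comap (fstRingHom K E)).monotone_u h
  let : Algebra R S := (Subring.inclusion hRS).toAlgebra
  let : Algebra A B := (Subring.inclusion h).toAlgebra
  let : Algebra R A := (fstComap E A).toAlgebra
  let : Algebra R B := ((Subring.inclusion h).comp (fstComap E A)).toAlgebra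
  have : IsScalarTower R A B := .of_algebraMap_eq fun _ => rfl
  have : Module.Flat R S := hf
  let g : S →ₐ[R] B := { fstComap E B with commutes' := fun _ => rfl }
  let F : A ⊗[R] S →ₐ[A] B := Algebra.TensorProduct.lift (Algebra.ofId A B) g fun _ _ => .all _ _
  have hF : ∀ s, F (1 ⊗ₜ s) = fstComap E B s := fun s =>
    (Algebra.TensorProduct.lift_tmul _ _ _ 1 s).trans (one_mul _)
  have surj : Function.Surjective F := fun b => by
    obtain ⟨s, rfl⟩ := fstComap_surjective (E := E) B b
    exact ⟨1 ⊗ₜ s, hF s⟩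
  have inj : Function.Injective F := by
    refine (injective_iff_map_eq_zero F).mpr fun z hz => ?_
    obtain ⟨s, rfl⟩ := exists_eq_one_tmul_of_surjective (fstComap_surjective A) z
    rw [hF, ← Subtype.val_inj] at hz
    let r : R := ⟨inr (snd s.1), inr_mem_comap_fstRingHom A _⟩
    have hs : s = algebraMap R S r := Subtype.ext (ext hz (by rfl))
    have hr : algebraMap R A r = 0 := Subtype.ext (fst_inr K (snd s.1))
    rw [hs, ← Algebra.TensorProduct.tmul_one_eq_one_tmul, hr, zero_tmul]
  exact Module.Flat.of_linearEquiv (AlgEquiv.ofBijective F ⟨inj, surj⟩).toLinearEquiv.symm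

theorem _root_.RingHom.Flat.inclusion_comap_fstRingHom {A B : Subring K}
    (hA : ∀ x : K, ∃ t ∈ A, IsUnit t ∧ x * t ∈ A) (h : A ≤ B) (hf : (Subring.inclusion h).Flat) :
    (Subring.inclusion ((Subring.gc_map_comap (fstRingHom K E)).monotone_u h)).Flat := by
  set R := A.comap (fstRingHom K E)
  set S := B.comap (fstRingHom K E)
  have hRS : R ≤ S := (Subring.gc_map_comap (fstRingHom K E)).monotone_u h
  let : Algebra R S := (Subring.inclusion hRS).toAlgebra
  let : Algebra A B := (Subring.inclusion h).toAlgebra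
  let : Algebra A R := (inlComap E A).toAlgebra
  let : Algebra A S := ((algebraMap R S).comp (inlComap E A)).toAlgebra
  have : IsScalarTower A R S := .of_algebraMap_eq fun _ => rfl
  have : Module.Flat A B := hf
  let g : B →ₐ[A] S := { inlComap E B with commutes' := fun _ => rfl }
  let F : R ⊗[A] B →ₐ[R] S := Algebra.TensorProduct.lift (Algebra.ofId R S) g fun _ _ => .all _ _
  have hF : ∀ e b, (F (inrComap E A e ⊗ₜ 1 + 1 ⊗ₜ b) : TrivSqZeroExt K E) = inr e + inl b.1 := by
    intro e b
    simp only [F, map_add, Algebra.TensorProduct.lift_tmul, map_one, mul_one, one_mul]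
    rfl
  have inr_tmul : ∀ e (b : B), inrComap E A e ⊗ₜ[A] b = inrComap E A (b.1 • e) ⊗ₜ 1 := by
    intro e b
    -- `b = a / u` with `a, u ∈ A`, `u` a unit of `K`: move `u` across `⊗` after dividing `e` by it
    obtain ⟨t, ht, ⟨u, rfl⟩, hbt⟩ := hA b.1
    have h1 : inrComap E A e = (⟨u, ht⟩ : A) • inrComap E A ((↑u⁻¹ : K) • e) := Subtype.ext <| by
      show inr e = inl (u : K) * inr ((↑u⁻¹ : K) • e)
      rw [inl_mul_inr, smul_smul, Units.mul_inv, one_smul]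
    have h2 : (⟨u, ht⟩ : A) • b = (⟨b.1 * u, hbt⟩ : A) • (1 : B) := Subtype.ext <| by
      show (u : K) * b.1 = b.1 * u * 1
      rw [mul_one, mul_comm]
    have h3 : (⟨b.1 * u, hbt⟩ : A) • inrComap E A ((↑u⁻¹ : K) • e) = inrComap E A (b.1 • e) :=
      Subtype.ext <| by
        show inl (b.1 * u) * inr ((↑u⁻¹ : K) • e) = inr (b.1 • e)
        rw [inl_mul_inr, smul_smul, mul_assoc, Units.mul_inv, mul_one]
    rw [h1, smul_tmul, h2, ← smul_tmul, h3]
  have normal_form : ∀ z : R ⊗[A] B, ∃ e b, z = inrComap E A e ⊗ₜ 1 + 1 ⊗ₜ b := by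
    intro z
    induction z with
    | zero => exact ⟨0, 0, by simp⟩
    | tmul r b =>
      let a : A := ⟨fst r.1, r.2⟩
      have hr : r = a • 1 + inrComap E A (snd r.1) :=
        Subtype.ext (by
          show r.1 = inl (fst r.1) * 1 + inr (snd r.1)
          rw [mul_one, inl_fst_add_inr_snd_eq])
      refine ⟨b.1 • snd r.1, a • b, ?_⟩
      conv_lhs => rw [hr]
      rw [add_tmul, smul_tmul, inr_tmul, add_comm]
    | add x y hx hy =>
      obtain ⟨e, b, rfl⟩ := hx
      obtain ⟨e', b', rfl⟩ := hy
      exact ⟨e + e', b + b', by rw [map_add, add_tmul, tmul_add]; abel⟩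
  have surj : Function.Surjective F := fun s =>
    ⟨inrComap E A (snd s.1) ⊗ₜ 1 + 1 ⊗ₜ ⟨fst s.1, s.2⟩, Subtype.ext <| by
      rw [hF, add_comm, inl_fst_add_inr_snd_eq]⟩
  have inj : Function.Injective F := by
    refine (injective_iff_map_eq_zero F).mpr fun z hz => ?_
    obtain ⟨e, b, rfl⟩ := normal_form z
    have h0 := hF e b
    rw [hz] at h0
    have he : e = 0 := by simpa using (congr_arg snd h0).symm
    have hb : b = 0 := Subtype.ext (by simpa using (congr_arg fst h0).symm)
    rw [he, hb, map_zero, zero_tmul, tmul_zero, add_zero]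
  exact Module.Flat.of_linearEquiv (AlgEquiv.ofBijective F ⟨inj, surj⟩).toLinearEquiv.symm

end TrivSqZeroExt

theorem IsLocalization.exists_isUnit_mul_mem_range {A K : Type*} [CommRing A] [CommRing K]
    [Algebra A K] (M : Submonoid A) [IsLocalization M K] (x : K) :
    ∃ t ∈ (algebraMap A K).range, IsUnit t ∧ x * t ∈ (algebraMap A K).range := by
  obtain ⟨⟨a, t⟩, hx⟩ := IsLocalization.surj M x
  exact ⟨_, ⟨t, rfl⟩, IsLocalization.map_units K t, ⟨a, hx.symm⟩⟩

set_option synthInstance.maxHeartbeats 1000000 in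
/-- For `R = A ⋉ E` with `E` a `Tot(A)`-module: every flat overring of `R` is well-centered
on `R` iff every flat overring of `A` is well-centered on `A`. -/
theorem trivial_extension_flat_wellCentered_iff
    (A : Type*) [CommRing A] (E : Type*) [AddCommGroup E] [Module (FractionRing A) E]
    (R : Subring (TrivSqZeroExt (FractionRing A) E))
    (hR : ∀ x, x ∈ R ↔ fst x ∈ (algebraMap A (FractionRing A)).range) :
    (∀ (S : Subring (TrivSqZeroExt (FractionRing A) E)) (h : R ≤ S),
        (letI := (Subring.inclusion h).toAlgebra; Module.Flat R S) → WellCentered R S) ↔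
    (∀ (B : Subring (FractionRing A)) (h : (algebraMap A (FractionRing A)).range ≤ B),
        (letI := (Subring.inclusion h).toAlgebra;
          Module.Flat (algebraMap A (FractionRing A)).range B) →
        WellCentered (algebraMap A (FractionRing A)).range B) := by
  set A₀ := (algebraMap A (FractionRing A)).range
  obtain rfl : R = A₀.comap (fstRingHom _ E) := Subring.ext hR
  constructor
  · intro H B hAB hB
    exact wellCentered_comap_fstRingHom_iff.mp <| H _ _ <| RingHom.Flat.inclusion_comap_fstRingHom
      (IsLocalization.exists_isUnit_mul_mem_range (nonZeroDivisors A)) hAB hB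
  · intro H S hRS hS
    obtain ⟨B, rfl⟩ : ∃ B : Subring (FractionRing A), S = B.comap (fstRingHom _ E) :=
      ⟨_, (comap_map_fstRingHom fun e => hRS (inr_mem_comap_fstRingHom _ e)).symm⟩
    have hAB : A₀ ≤ B := fun a ha => by simpa using hRS (show inl a ∈ _ by simpa)
    exact wellCentered_comap_fstRingHom_iff.mpr
      (H B hAB (RingHom.Flat.of_inclusion_comap_fstRingHom hAB hS))
end

section
/- Let V be a valuation domain that is not a field, L its quotient field, E a nonzero L-vector space, and R = V ⋉ E the trivial extension. Then R is not a coherent ring: for 0 ≠ e ∈ E, the annihilator of (0,e) in R equals 0 ⋉ E, which is not a finitely generated ideal of R. -/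
/-!
For `0 ≠ e ∈ E`, `x * (0, e) = (0, fst x • e)`, and `E` is torsion-free over `V`, so the annihilator
of `(0, e)` is `0 ⋉ E`. A finite set of generators of this ideal would make `E` a finitely
generated `V`-module. But every nonzero nonunit `t` of the local ring `V` acts surjectively on the
`L`-vector space `E`, so `E = t E` and Nakayama's lemma forces `E = 0`. Since a coherent ring has
finitely generated annihilators, `R` is not coherent.
-/

open TrivSqZeroExt

def IsCoherentRing (R : Type*) [CommRing R] : Prop :=
  ∀ I : Ideal R, I.FG → Module.FinitePresentation R I

open IsLocalRing

open scoped Pointwise in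
theorem Module.Finite.subsingleton_of_surjective_smul {V M : Type*} [CommRing V] [IsLocalRing V]
    [AddCommGroup M] [Module V M] [Module.Finite V M] {t : V} (ht : t ∈ maximalIdeal V)
    (hsurj : Function.Surjective fun m : M => t • m) : Subsingleton M := by
  have htop : (⊤ : Submodule V M) = t • ⊤ := by
    refine le_antisymm (fun m _ => ?_) le_top
    obtain ⟨m', rfl⟩ := hsurj m
    exact (Submodule.mem_smul_pointwise_iff_exists _ _ _).2 ⟨m', trivial, rfl⟩
  have hjac : t ∈ (⊤ : Submodule V M).annihilator.jacobson := by
    refine Ideal.jacobson_mono bot_le ?_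
    rwa [jacobson_eq_maximalIdeal ⊥ bot_ne_top]
  have hbot := Submodule.eq_bot_of_eq_pointwise_smul_of_mem_jacobson_annihilator
    Module.Finite.fg_top htop hjac
  exact (Submodule.subsingleton_iff V).mp (subsingleton_iff_bot_eq_top.mp hbot.symm)

theorem Module.not_finite_of_isScalarTower_field (V L E : Type*) [CommRing V] [IsLocalRing V]
    (hV : ¬ IsField V) [Field L] [Algebra V L] [FaithfulSMul V L] [AddCommGroup E] [Nontrivial E]
    [Module V E] [Module L E] [IsScalarTower V L E] : ¬ Module.Finite V E := by
  intro hfin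
  obtain ⟨t, ht, ht0⟩ := Submodule.exists_mem_ne_zero_of_ne_bot
    (mt isField_iff_maximalIdeal_eq.mpr hV)
  have htL : algebraMap V L t ≠ 0 :=
    (map_ne_zero_iff _ (FaithfulSMul.algebraMap_injective V L)).mpr ht0
  have hsurj : Function.Surjective fun m : E => t • m := fun m =>
    ⟨(algebraMap V L t)⁻¹ • m, by
      simp only [← algebraMap_smul L t, smul_smul, mul_inv_cancel₀ htL, one_smul]⟩
  exact not_subsingleton E (hfin.subsingleton_of_surjective_smul ht hsurj)

theorem IsCoherentRing.fg_ker_toSpanSingleton {R : Type*} [CommRing R] (h : IsCoherentRing R)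
    (a : R) : (LinearMap.ker (LinearMap.toSpanSingleton R R a)).FG := by
  let f := LinearMap.toSpanSingleton R R a
  have : Module.FinitePresentation R (LinearMap.range f) :=
    h _ ⟨{a}, by rw [LinearMap.range_toSpanSingleton, Finset.coe_singleton]⟩
  rw [← LinearMap.ker_rangeRestrict f]
  exact Module.FinitePresentation.fg_ker _ f.surjective_rangeRestrict

namespace TrivSqZeroExt

variable {R M : Type*} [CommRing R] [AddCommGroup M] [Module R M]

theorem mul_inr_eq_zero_iff (x : TrivSqZeroExt R M) (m : M) : x * inr m = 0 ↔ fst x • m = 0 := by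
  rw [← inl_fst_add_inr_snd_eq x, add_mul, inl_mul_inr, inr_mul_inr, add_zero, fst_add, fst_inl,
    fst_inr, add_zero, ← inr_zero, inr_injective.eq_iff]

theorem mul_inr_eq_zero_iff_mem_ker_fstRingHom [IsCancelMulZero R] [Module.IsTorsionFree R M]
    {m : M} (hm : m ≠ 0) (x : TrivSqZeroExt R M) :
    x * inr m = 0 ↔ x ∈ RingHom.ker (fstRingHom R M) := by
  rw [mul_inr_eq_zero_iff, smul_eq_zero_iff_left hm]
  rfl

theorem ker_toSpanSingleton_inr [IsCancelMulZero R] [Module.IsTorsionFree R M] {m : M}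
    (hm : m ≠ 0) :
    LinearMap.ker (LinearMap.toSpanSingleton _ _ (inr m : TrivSqZeroExt R M)) =
      RingHom.ker (fstRingHom R M) := by
  ext x
  exact mul_inr_eq_zero_iff_mem_ker_fstRingHom hm x

theorem snd_mem_span_image_snd {s : Set (TrivSqZeroExt R M)}
    (hs : s ⊆ RingHom.ker (fstRingHom R M)) {y : TrivSqZeroExt R M} (hy : y ∈ Ideal.span s) :
    snd y ∈ Submodule.span R (snd '' s) := by
  induction hy using Submodule.span_induction with
  | mem x hx => exact Submodule.subset_span ⟨x, hx, rfl⟩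
  | zero => exact zero_mem _
  | add x y _ _ hx hy => exact add_mem hx hy
  | smul r x hx hsx =>
    have hx0 : fst x = 0 := Ideal.span_le.mpr hs hx
    rw [smul_eq_mul, snd_mul, hx0, MulOpposite.op_zero, zero_smul, add_zero]
    exact Submodule.smul_mem _ _ hsx

theorem module_finite_of_fg_ker_fstRingHom (h : (RingHom.ker (fstRingHom R M)).FG) :
    Module.Finite R M := by
  classical
  obtain ⟨s, hs⟩ := h
  have hsub : (s : Set (TrivSqZeroExt R M)) ⊆ RingHom.ker (fstRingHom R M) :=
    hs ▸ Ideal.subset_span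
  refine ⟨⟨s.image snd, eq_top_iff.mpr fun m _ => ?_⟩⟩
  have hm : inr m ∈ Ideal.span (s : Set (TrivSqZeroExt R M)) := hs ▸ fst_inr R m
  simpa using snd_mem_span_image_snd hsub hm

end TrivSqZeroExt

/-- Let `V` be a valuation domain which is not a field, `L = qf(V)`, `E` a nonzero
`L`-vector space, and `R = V ⋉ E`.  Then the annihilator of `(0,e)` (for `0 ≠ e ∈ E`) is the
ideal `0 ⋉ E = ker(fst)`, which is not finitely generated, and `R` is not coherent. -/
theorem trivial_extension_of_valuation_domain_not_coherent
    (V : Type*) [CommRing V] [IsDomain V] [ValuationRing V] (hV : ¬ IsField V)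
    (E : Type*) [AddCommGroup E] [Module V E]
    [Module (FractionRing V) E] [IsScalarTower V (FractionRing V) E]
    (hE : ∃ e : E, e ≠ 0) :
    (∀ e : E, e ≠ 0 →
      (∀ x : TrivSqZeroExt V E, x * inr e = 0 ↔ x ∈ RingHom.ker (fstRingHom V E))) ∧
    ¬ (RingHom.ker (fstRingHom V E)).FG ∧
    ¬ IsCoherentRing (TrivSqZeroExt V E) := by
  have : Module.IsTorsionFree V E := .trans_faithfulSMul V (FractionRing V) E
  obtain ⟨e, he⟩ := hE
  have hnfg : ¬ (RingHom.ker (fstRingHom V E)).FG := fun hfg =>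
    have : Nontrivial E := ⟨⟨e, 0, he⟩⟩
    Module.not_finite_of_isScalarTower_field V (FractionRing V) E hV
      (module_finite_of_fg_ker_fstRingHom hfg)
  refine ⟨fun _ hm => mul_inr_eq_zero_iff_mem_ker_fstRingHom hm, hnfg, fun hcoh => hnfg ?_⟩
  rw [← ker_toSpanSingleton_inr he]
  exact hcoh.fg_ker_toSpanSingleton _
end
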